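/- arXiv:2501.02528 — 4 statements merged into one kernel-verified Lean document; each statement's English description precedes it below -/
import Mathlib

section
/- Let p ∈ (0,∞) and (M,d,+) be a complete metric semigroup. If ρ_p(f,g) = 0 for f,g in the bivariate Wiener p-variation space WBV_p(I×I,M), where ρ_p(f,g) = d(f(0,0),g(0,0)) + V_p(f,g), then f(t,s) = g(t,s) for all t,s ∈ [0,1]. -/
open Finset

/-- `t` represents a partition `0 = t 0 < t 1 < ⋯ < t n = 1` of `[0,1]`. -/
def IsPartition (n : ℕ) (t : ℕ → ℝ) : Prop :=
  0 < n ∧ t 0 = 0 ∧ t n = 1 ∧ ∀ i < n, t i < t (i + 1)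

/-- `normW p x = x ^ (1/p)` when `p ≥ 1`, and `x` itself when `p < 1`,
matching the two cases in the definition of the Wiener `p`-variation. -/
noncomputable def normW (p x : ℝ) : ℝ := if 1 ≤ p then x ^ (1 / p) else x

variable {M : Type*} [MetricSpace M] [AddCommSemigroup M]

/-- Marginal partition sum `Σ_i d^p(f(t_i,0), f(t_{i-1},0))`. -/
noncomputable def wSum1 (p : ℝ) (f : ℝ → ℝ → M) (n : ℕ) (t : ℕ → ℝ) : ℝ :=
  ∑ i ∈ range n, dist (f (t (i + 1)) 0) (f (t i) 0) ^ p

/-- Marginal partition sum `Σ_j d^p(f(0,s_j), f(0,s_{j-1}))`. -/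
noncomputable def wSum2 (p : ℝ) (f : ℝ → ℝ → M) (m : ℕ) (s : ℕ → ℝ) : ℝ :=
  ∑ j ∈ range m, dist (f 0 (s (j + 1))) (f 0 (s j)) ^ p

/-- Double partition sum of the mixed differences. -/
noncomputable def wSum12 (p : ℝ) (f : ℝ → ℝ → M) (n : ℕ) (t : ℕ → ℝ)
    (m : ℕ) (s : ℕ → ℝ) : ℝ :=
  ∑ j ∈ range m, ∑ i ∈ range n,
    dist (f (t (i + 1)) (s (j + 1)) + f (t i) (s j))
         (f (t (i + 1)) (s j) + f (t i) (s (j + 1))) ^ p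

/-- Joint marginal sum for two functions. -/
noncomputable def wSum1J (p : ℝ) (f g : ℝ → ℝ → M) (n : ℕ) (t : ℕ → ℝ) : ℝ :=
  ∑ i ∈ range n,
    dist (f (t (i + 1)) 0 + g (t i) 0) (f (t i) 0 + g (t (i + 1)) 0) ^ p

noncomputable def wSum2J (p : ℝ) (f g : ℝ → ℝ → M) (m : ℕ) (s : ℕ → ℝ) : ℝ :=
  ∑ j ∈ range m,
    dist (f 0 (s (j + 1)) + g 0 (s j)) (f 0 (s j) + g 0 (s (j + 1))) ^ p

noncomputable def wSum12J (p : ℝ) (f g : ℝ → ℝ → M) (n : ℕ) (t : ℕ → ℝ)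
    (m : ℕ) (s : ℕ → ℝ) : ℝ :=
  ∑ j ∈ range m, ∑ i ∈ range n,
    dist (f (t (i + 1)) (s (j + 1)) + f (t i) (s j)
            + g (t (i + 1)) (s j) + g (t i) (s (j + 1)))
         (g (t (i + 1)) (s (j + 1)) + g (t i) (s j)
            + f (t (i + 1)) (s j) + f (t i) (s (j + 1))) ^ p

/-- The set of partition values of `V_p(f(·,0), Π)`. -/
def wSet1 (p : ℝ) (f : ℝ → ℝ → M) : Set ℝ :=
  {x | ∃ n t, IsPartition n t ∧ x = normW p (wSum1 p f n t)}

def wSet2 (p : ℝ) (f : ℝ → ℝ → M) : Set ℝ :=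
  {x | ∃ m s, IsPartition m s ∧ x = normW p (wSum2 p f m s)}

def wSet12 (p : ℝ) (f : ℝ → ℝ → M) : Set ℝ :=
  {x | ∃ n t m s, IsPartition n t ∧ IsPartition m s ∧ x = normW p (wSum12 p f n t m s)}

/-- Total Wiener `p`-variation `V_p(f) = V_p(f(·,0)) + V_p(f(0,·)) + V_{p,2}(f)`. -/
noncomputable def Vp (p : ℝ) (f : ℝ → ℝ → M) : ℝ :=
  sSup (wSet1 p f) + sSup (wSet2 p f) + sSup (wSet12 p f)

/-- `f` has bounded Wiener `p`-variation on `I × I`. -/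
def MemWBV (p : ℝ) (f : ℝ → ℝ → M) : Prop :=
  BddAbove (wSet1 p f) ∧ BddAbove (wSet2 p f) ∧ BddAbove (wSet12 p f)

/-- The joint variation of `f, g` over a fixed pair of partitions,
`V_p(f,g,Π×Π*)`. -/
noncomputable def VpPart (p : ℝ) (f g : ℝ → ℝ → M) (n : ℕ) (t : ℕ → ℝ)
    (m : ℕ) (s : ℕ → ℝ) : ℝ :=
  normW p (wSum1J p f g n t) + normW p (wSum2J p f g m s) + normW p (wSum12J p f g n t m s)

def wSetJ (p : ℝ) (f g : ℝ → ℝ → M) : Set ℝ :=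
  {x | ∃ n t m s, IsPartition n t ∧ IsPartition m s ∧ x = VpPart p f g n t m s}

/-- The joint Wiener `p`-variation `V_p(f,g)`. -/
noncomputable def VpJ (p : ℝ) (f g : ℝ → ℝ → M) : ℝ := sSup (wSetJ p f g)

/-- The metric `ρ_p(f,g) = d(f(0,0), g(0,0)) + V_p(f,g)` on `WBV_p(I×I, M)`. -/
noncomputable def rhoP (p : ℝ) (f g : ℝ → ℝ → M) : ℝ :=
  dist (f 0 0) (g 0 0) + VpJ p f g


section AuxProof

variable {M : Type*} [MetricSpace M] [AddCommSemigroup M]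

private lemma dist_joint_le (hd : ∀ u v w : M, dist (u + w) (v + w) = dist u v)
    (u a v b : M) : dist (u + b) (v + a) ≤ dist u a + dist v b := by
  calc dist (u + b) (v + a) ≤ dist (u + b) (a + b) + dist (a + b) (v + a) :=
        dist_triangle _ _ _
    _ = dist u a + dist v b := by
        rw [hd u a b, add_comm a b, hd b v a, dist_comm b v]

private lemma rpow_add_le {p : ℝ} (hp : 0 < p) {a b : ℝ} (ha : 0 ≤ a) (hb : 0 ≤ b) :
    (a + b) ^ p ≤ 2 ^ p * (a ^ p + b ^ p) := by
  have hmax : 0 ≤ max a b := le_trans ha (le_max_left a b)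
  have h1 : a + b ≤ 2 * max a b := by
    have := le_max_left a b; have := le_max_right a b; linarith
  have h2 : (a + b) ^ p ≤ (2 * max a b) ^ p :=
    Real.rpow_le_rpow (by linarith) h1 hp.le
  have h3 : (2 * max a b) ^ p = 2 ^ p * (max a b) ^ p :=
    Real.mul_rpow (by norm_num) hmax
  have h4 : (max a b) ^ p ≤ a ^ p + b ^ p := by
    rcases max_cases a b with ⟨hm, _⟩ | ⟨hm, _⟩ <;> rw [hm]
    · exact le_add_of_nonneg_right (Real.rpow_nonneg hb p)
    · exact le_add_of_nonneg_left (Real.rpow_nonneg ha p)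
  calc (a + b) ^ p ≤ 2 ^ p * (max a b) ^ p := by rw [← h3]; exact h2
    _ ≤ 2 ^ p * (a ^ p + b ^ p) :=
        mul_le_mul_of_nonneg_left h4 (Real.rpow_nonneg (by norm_num) p)

private lemma normW_nonneg (p : ℝ) {x : ℝ} (hx : 0 ≤ x) : 0 ≤ normW p x := by
  unfold normW; split
  · exact Real.rpow_nonneg hx _
  · exact hx

private lemma normW_mono (p : ℝ) {x y : ℝ} (hx : 0 ≤ x) (h : x ≤ y) :
    normW p x ≤ normW p y := by
  unfold normW; split
  case isTrue h1 => exact Real.rpow_le_rpow hx h (div_nonneg zero_le_one (by linarith))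
  case isFalse => exact h

private lemma normW_eq_zero {p : ℝ} (hp : 0 < p) {x : ℝ} (hx : 0 ≤ x)
    (h : normW p x = 0) : x = 0 := by
  unfold normW at h; split at h
  · exact (Real.rpow_eq_zero hx (one_div_ne_zero hp.ne')).mp h
  · exact h

private lemma le_of_normW_le {p : ℝ} (hp : 0 < p) {S C : ℝ} (hS : 0 ≤ S)
    (h : normW p S ≤ C) : S ≤ if 1 ≤ p then (max C 0) ^ p else C := by
  unfold normW at h; split_ifs with h1
  · have hmem : S ^ (1 / p) ≤ max C 0 := by
      simp only [h1, if_true] at h; exact h.trans (le_max_left _ _)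
    have heq : (S ^ (1 / p)) ^ p = S := by
      rw [← Real.rpow_mul hS, one_div, inv_mul_cancel₀ hp.ne', Real.rpow_one]
    calc S = (S ^ (1 / p)) ^ p := heq.symm
      _ ≤ (max C 0) ^ p := Real.rpow_le_rpow (Real.rpow_nonneg hS _) hmem hp.le
  · simpa [h1] using h

private lemma exists_partition {t : ℝ} (ht0 : 0 < t) (ht1 : t ≤ 1) :
    ∃ n τ, IsPartition n τ ∧ τ 0 = 0 ∧ τ 1 = t := by
  rcases eq_or_lt_of_le ht1 with h | h
  · refine ⟨1, fun i => if i = 0 then 0 else t,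
      ⟨one_pos, by norm_num, by norm_num [h], ?_⟩, by norm_num, by norm_num⟩
    intro i hi
    interval_cases i
    simpa using ht0
  · refine ⟨2, fun i => if i = 0 then 0 else if i = 1 then t else 1,
      ⟨two_pos, by norm_num, by norm_num, ?_⟩, by norm_num, by norm_num⟩
    intro i hi
    interval_cases i <;> simp [ht0, h]

private lemma trivial_partition : IsPartition 1 (fun i => if i = 0 then (0:ℝ) else 1) := by
  refine ⟨one_pos, by norm_num, by norm_num, ?_⟩
  intro i hi
  interval_cases i
  norm_num

private lemma wSum1_nonneg (p : ℝ) (f : ℝ → ℝ → M) (n : ℕ) (t : ℕ → ℝ) :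
    0 ≤ wSum1 p f n t :=
  Finset.sum_nonneg fun _ _ => Real.rpow_nonneg dist_nonneg p

private lemma wSum2_nonneg (p : ℝ) (f : ℝ → ℝ → M) (m : ℕ) (s : ℕ → ℝ) :
    0 ≤ wSum2 p f m s :=
  Finset.sum_nonneg fun _ _ => Real.rpow_nonneg dist_nonneg p

private lemma wSum12_nonneg (p : ℝ) (f : ℝ → ℝ → M) (n : ℕ) (t : ℕ → ℝ)
    (m : ℕ) (s : ℕ → ℝ) : 0 ≤ wSum12 p f n t m s :=
  Finset.sum_nonneg fun _ _ => Finset.sum_nonneg fun _ _ => Real.rpow_nonneg dist_nonneg p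

private lemma wSum1J_nonneg (p : ℝ) (f g : ℝ → ℝ → M) (n : ℕ) (t : ℕ → ℝ) :
    0 ≤ wSum1J p f g n t :=
  Finset.sum_nonneg fun _ _ => Real.rpow_nonneg dist_nonneg p

private lemma wSum2J_nonneg (p : ℝ) (f g : ℝ → ℝ → M) (m : ℕ) (s : ℕ → ℝ) :
    0 ≤ wSum2J p f g m s :=
  Finset.sum_nonneg fun _ _ => Real.rpow_nonneg dist_nonneg p

private lemma wSum12J_nonneg (p : ℝ) (f g : ℝ → ℝ → M) (n : ℕ) (t : ℕ → ℝ)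
    (m : ℕ) (s : ℕ → ℝ) : 0 ≤ wSum12J p f g n t m s :=
  Finset.sum_nonneg fun _ _ => Finset.sum_nonneg fun _ _ => Real.rpow_nonneg dist_nonneg p

private lemma VpPart_nonneg (p : ℝ) (f g : ℝ → ℝ → M) (n : ℕ) (t : ℕ → ℝ)
    (m : ℕ) (s : ℕ → ℝ) : 0 ≤ VpPart p f g n t m s := by
  have h1 := normW_nonneg p (wSum1J_nonneg p f g n t)
  have h2 := normW_nonneg p (wSum2J_nonneg p f g m s)
  have h3 := normW_nonneg p (wSum12J_nonneg p f g n t m s)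
  unfold VpPart; linarith

end AuxProof

/-- For `p ∈ (0,∞)` and a complete metric semigroup `M`: if `ρ_p(f,g) = 0` for
`f, g ∈ WBV_p(I×I, M)`, then `f = g` on `[0,1] × [0,1]`. -/
theorem rhoP_eq_zero_imp_eq [CompleteSpace M] (p : ℝ) (hp : 0 < p)
    (hd : ∀ u v w : M, dist (u + w) (v + w) = dist u v)
    (f g : ℝ → ℝ → M) (hf : MemWBV p f) (hg : MemWBV p g)
    (h : rhoP p f g = 0) :
    ∀ t ∈ Set.Icc (0:ℝ) 1, ∀ s ∈ Set.Icc (0:ℝ) 1, f t s = g t s := by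
  classical
  obtain ⟨C1f, hC1f⟩ := hf.1
  obtain ⟨C2f, hC2f⟩ := hf.2.1
  obtain ⟨C12f, hC12f⟩ := hf.2.2
  obtain ⟨C1g, hC1g⟩ := hg.1
  obtain ⟨C2g, hC2g⟩ := hg.2.1
  obtain ⟨C12g, hC12g⟩ := hg.2.2
  set K1f : ℝ := if 1 ≤ p then (max C1f 0) ^ p else C1f with hK1f
  set K2f : ℝ := if 1 ≤ p then (max C2f 0) ^ p else C2f with hK2f
  set K12f : ℝ := if 1 ≤ p then (max C12f 0) ^ p else C12f with hK12f
  set K1g : ℝ := if 1 ≤ p then (max C1g 0) ^ p else C1g with hK1g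
  set K2g : ℝ := if 1 ≤ p then (max C2g 0) ^ p else C2g with hK2g
  set K12g : ℝ := if 1 ≤ p then (max C12g 0) ^ p else C12g with hK12g
  have hb1f : ∀ n t, IsPartition n t → wSum1 p f n t ≤ K1f := fun n t ht =>
    le_of_normW_le hp (wSum1_nonneg p f n t) (hC1f ⟨n, t, ht, rfl⟩)
  have hb2f : ∀ m s, IsPartition m s → wSum2 p f m s ≤ K2f := fun m s hs =>
    le_of_normW_le hp (wSum2_nonneg p f m s) (hC2f ⟨m, s, hs, rfl⟩)
  have hb12f : ∀ n t m s, IsPartition n t → IsPartition m s → wSum12 p f n t m s ≤ K12f :=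
    fun n t m s ht hs =>
    le_of_normW_le hp (wSum12_nonneg p f n t m s) (hC12f ⟨n, t, m, s, ht, hs, rfl⟩)
  have hb1g : ∀ n t, IsPartition n t → wSum1 p g n t ≤ K1g := fun n t ht =>
    le_of_normW_le hp (wSum1_nonneg p g n t) (hC1g ⟨n, t, ht, rfl⟩)
  have hb2g : ∀ m s, IsPartition m s → wSum2 p g m s ≤ K2g := fun m s hs =>
    le_of_normW_le hp (wSum2_nonneg p g m s) (hC2g ⟨m, s, hs, rfl⟩)
  have hb12g : ∀ n t m s, IsPartition n t → IsPartition m s → wSum12 p g n t m s ≤ K12g :=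
    fun n t m s ht hs =>
    le_of_normW_le hp (wSum12_nonneg p g n t m s) (hC12g ⟨n, t, m, s, ht, hs, rfl⟩)
  have h2p : (0:ℝ) ≤ 2 ^ p := Real.rpow_nonneg (by norm_num) p
  -- bound the joint sums
  have hJ1 : ∀ n t, IsPartition n t → wSum1J p f g n t ≤ 2 ^ p * (K1f + K1g) := by
    intro n t ht
    have hle : wSum1J p f g n t ≤ 2 ^ p * (wSum1 p f n t + wSum1 p g n t) := by
      unfold wSum1J wSum1
      calc ∑ i ∈ range n,
            dist (f (t (i + 1)) 0 + g (t i) 0) (f (t i) 0 + g (t (i + 1)) 0) ^ p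
          ≤ ∑ i ∈ range n, 2 ^ p * (dist (f (t (i + 1)) 0) (f (t i) 0) ^ p
              + dist (g (t (i + 1)) 0) (g (t i) 0) ^ p) := by
            apply Finset.sum_le_sum
            intro i _
            have h1 : dist (f (t (i + 1)) 0 + g (t i) 0) (f (t i) 0 + g (t (i + 1)) 0)
                ≤ dist (f (t (i + 1)) 0) (f (t i) 0) + dist (g (t (i + 1)) 0) (g (t i) 0) := by
              rw [add_comm (f (t i) 0) (g (t (i + 1)) 0)]
              exact dist_joint_le hd _ _ _ _
            calc _ ≤ (dist (f (t (i + 1)) 0) (f (t i) 0)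
                      + dist (g (t (i + 1)) 0) (g (t i) 0)) ^ p :=
                  Real.rpow_le_rpow dist_nonneg h1 hp.le
              _ ≤ _ := rpow_add_le hp dist_nonneg dist_nonneg
        _ = 2 ^ p * ((∑ i ∈ range n, dist (f (t (i + 1)) 0) (f (t i) 0) ^ p)
              + ∑ i ∈ range n, dist (g (t (i + 1)) 0) (g (t i) 0) ^ p) := by
            rw [← Finset.mul_sum, Finset.sum_add_distrib]
    exact hle.trans (mul_le_mul_of_nonneg_left
      (add_le_add (hb1f n t ht) (hb1g n t ht)) h2p)
  have hJ2 : ∀ m s, IsPartition m s → wSum2J p f g m s ≤ 2 ^ p * (K2f + K2g) := by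
    intro m s hsP
    have hle : wSum2J p f g m s ≤ 2 ^ p * (wSum2 p f m s + wSum2 p g m s) := by
      unfold wSum2J wSum2
      calc ∑ j ∈ range m,
            dist (f 0 (s (j + 1)) + g 0 (s j)) (f 0 (s j) + g 0 (s (j + 1))) ^ p
          ≤ ∑ j ∈ range m, 2 ^ p * (dist (f 0 (s (j + 1))) (f 0 (s j)) ^ p
              + dist (g 0 (s (j + 1))) (g 0 (s j)) ^ p) := by
            apply Finset.sum_le_sum
            intro j _
            have h1 : dist (f 0 (s (j + 1)) + g 0 (s j)) (f 0 (s j) + g 0 (s (j + 1)))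
                ≤ dist (f 0 (s (j + 1))) (f 0 (s j)) + dist (g 0 (s (j + 1))) (g 0 (s j)) := by
              rw [add_comm (f 0 (s j)) (g 0 (s (j + 1)))]
              exact dist_joint_le hd _ _ _ _
            calc _ ≤ (dist (f 0 (s (j + 1))) (f 0 (s j))
                      + dist (g 0 (s (j + 1))) (g 0 (s j))) ^ p :=
                  Real.rpow_le_rpow dist_nonneg h1 hp.le
              _ ≤ _ := rpow_add_le hp dist_nonneg dist_nonneg
        _ = 2 ^ p * ((∑ j ∈ range m, dist (f 0 (s (j + 1))) (f 0 (s j)) ^ p)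
              + ∑ j ∈ range m, dist (g 0 (s (j + 1))) (g 0 (s j)) ^ p) := by
            rw [← Finset.mul_sum, Finset.sum_add_distrib]
    exact hle.trans (mul_le_mul_of_nonneg_left
      (add_le_add (hb2f m s hsP) (hb2g m s hsP)) h2p)
  have hJ12 : ∀ n t m s, IsPartition n t → IsPartition m s →
      wSum12J p f g n t m s ≤ 2 ^ p * (K12f + K12g) := by
    intro n t m s htP hsP
    have hle : wSum12J p f g n t m s
        ≤ 2 ^ p * (wSum12 p f n t m s + wSum12 p g n t m s) := by
      unfold wSum12J wSum12
      calc ∑ j ∈ range m, ∑ i ∈ range n,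
            dist (f (t (i + 1)) (s (j + 1)) + f (t i) (s j)
                    + g (t (i + 1)) (s j) + g (t i) (s (j + 1)))
                 (g (t (i + 1)) (s (j + 1)) + g (t i) (s j)
                    + f (t (i + 1)) (s j) + f (t i) (s (j + 1))) ^ p
          ≤ ∑ j ∈ range m, ∑ i ∈ range n, 2 ^ p *
              (dist (f (t (i + 1)) (s (j + 1)) + f (t i) (s j))
                    (f (t (i + 1)) (s j) + f (t i) (s (j + 1))) ^ p
               + dist (g (t (i + 1)) (s (j + 1)) + g (t i) (s j))
                    (g (t (i + 1)) (s j) + g (t i) (s (j + 1))) ^ p) := by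
            apply Finset.sum_le_sum
            intro j _
            apply Finset.sum_le_sum
            intro i _
            have h1 : dist (f (t (i + 1)) (s (j + 1)) + f (t i) (s j)
                    + g (t (i + 1)) (s j) + g (t i) (s (j + 1)))
                 (g (t (i + 1)) (s (j + 1)) + g (t i) (s j)
                    + f (t (i + 1)) (s j) + f (t i) (s (j + 1)))
                ≤ dist (f (t (i + 1)) (s (j + 1)) + f (t i) (s j))
                    (f (t (i + 1)) (s j) + f (t i) (s (j + 1)))
                  + dist (g (t (i + 1)) (s (j + 1)) + g (t i) (s j))
                    (g (t (i + 1)) (s j) + g (t i) (s (j + 1))) := by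
              rw [add_assoc (f (t (i + 1)) (s (j + 1)) + f (t i) (s j)),
                  add_assoc (g (t (i + 1)) (s (j + 1)) + g (t i) (s j))]
              exact dist_joint_le hd _ _ _ _
            calc _ ≤ (dist (f (t (i + 1)) (s (j + 1)) + f (t i) (s j))
                    (f (t (i + 1)) (s j) + f (t i) (s (j + 1)))
                  + dist (g (t (i + 1)) (s (j + 1)) + g (t i) (s j))
                    (g (t (i + 1)) (s j) + g (t i) (s (j + 1)))) ^ p :=
                  Real.rpow_le_rpow dist_nonneg h1 hp.le
              _ ≤ _ := rpow_add_le hp dist_nonneg dist_nonneg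
        _ = 2 ^ p * ((∑ j ∈ range m, ∑ i ∈ range n,
              dist (f (t (i + 1)) (s (j + 1)) + f (t i) (s j))
                   (f (t (i + 1)) (s j) + f (t i) (s (j + 1))) ^ p)
              + ∑ j ∈ range m, ∑ i ∈ range n,
              dist (g (t (i + 1)) (s (j + 1)) + g (t i) (s j))
                   (g (t (i + 1)) (s j) + g (t i) (s (j + 1))) ^ p) := by
            simp only [← Finset.mul_sum, Finset.sum_add_distrib]
    exact hle.trans (mul_le_mul_of_nonneg_left
      (add_le_add (hb12f n t m s htP hsP) (hb12g n t m s htP hsP)) h2p)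
  -- bounded above
  have hbdd : BddAbove (wSetJ p f g) := by
    refine ⟨normW p (2 ^ p * (K1f + K1g)) + normW p (2 ^ p * (K2f + K2g))
      + normW p (2 ^ p * (K12f + K12g)), ?_⟩
    rintro x ⟨n, t, m, s, hnt, hms, rfl⟩
    unfold VpPart
    have e1 := normW_mono p (wSum1J_nonneg p f g n t) (hJ1 n t hnt)
    have e2 := normW_mono p (wSum2J_nonneg p f g m s) (hJ2 m s hms)
    have e3 := normW_mono p (wSum12J_nonneg p f g n t m s) (hJ12 n t m s hnt hms)
    linarith
  -- VpJ nonneg, dist zero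
  have hmem0 : VpPart p f g 1 (fun i => if i = 0 then (0:ℝ) else 1)
      1 (fun i => if i = 0 then (0:ℝ) else 1) ∈ wSetJ p f g :=
    ⟨1, _, 1, _, trivial_partition, trivial_partition, rfl⟩
  have hVpJ_nonneg : 0 ≤ VpJ p f g :=
    le_trans (VpPart_nonneg p f g _ _ _ _) (le_csSup hbdd hmem0)
  have hdnn : (0:ℝ) ≤ dist (f 0 0) (g 0 0) := dist_nonneg
  unfold rhoP at h
  have hdist00 : dist (f 0 0) (g 0 0) = 0 := by linarith
  have hVpJ : sSup (wSetJ p f g) = 0 := by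
    have : VpJ p f g = 0 := by linarith
    exact this
  have h00 : f 0 0 = g 0 0 := dist_eq_zero.mp hdist00
  -- every partition value is zero
  have hsum0 : ∀ n t m s, IsPartition n t → IsPartition m s →
      wSum1J p f g n t = 0 ∧ wSum2J p f g m s = 0 ∧ wSum12J p f g n t m s = 0 := by
    intro n t m s hnt hms
    have hle : VpPart p f g n t m s ≤ 0 := by
      have := le_csSup hbdd (show VpPart p f g n t m s ∈ wSetJ p f g from
        ⟨n, t, m, s, hnt, hms, rfl⟩)
      rw [hVpJ] at this
      exact this
    have h0 : VpPart p f g n t m s = 0 :=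
      le_antisymm hle (VpPart_nonneg p f g n t m s)
    unfold VpPart at h0
    have n1 := normW_nonneg p (wSum1J_nonneg p f g n t)
    have n2 := normW_nonneg p (wSum2J_nonneg p f g m s)
    have n3 := normW_nonneg p (wSum12J_nonneg p f g n t m s)
    exact ⟨normW_eq_zero hp (wSum1J_nonneg p f g n t) (by linarith),
      normW_eq_zero hp (wSum2J_nonneg p f g m s) (by linarith),
      normW_eq_zero hp (wSum12J_nonneg p f g n t m s) (by linarith)⟩
  -- equality on the bottom edge
  have key1 : ∀ t ∈ Set.Icc (0:ℝ) 1, f t 0 = g t 0 := by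
    rintro t ⟨ht0, ht1⟩
    rcases eq_or_lt_of_le ht0 with h0 | h0
    · rw [← h0]; exact h00
    obtain ⟨n, τ, hτ, hτ0, hτ1⟩ := exists_partition h0 ht1
    have hs := (hsum0 n τ 1 (fun i => if i = 0 then (0:ℝ) else 1) hτ trivial_partition).1
    unfold wSum1J at hs
    have hterm := (Finset.sum_eq_zero_iff_of_nonneg
      (fun i _ => Real.rpow_nonneg dist_nonneg p)).mp hs 0 (Finset.mem_range.mpr hτ.1)
    simp only [zero_add] at hterm
    rw [hτ0, hτ1] at hterm
    have hd0 : dist (f t 0 + g 0 0) (f 0 0 + g t 0) = 0 :=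
      (Real.rpow_eq_zero dist_nonneg hp.ne').mp hterm
    have heq : f t 0 + g 0 0 = f 0 0 + g t 0 := dist_eq_zero.mp hd0
    have heq2 : f t 0 + g 0 0 = g t 0 + g 0 0 := by rw [heq, h00, add_comm]
    have : dist (f t 0) (g t 0) = 0 := by
      rw [← hd (f t 0) (g t 0) (g 0 0), heq2, dist_self]
    exact dist_eq_zero.mp this
  -- equality on the left edge
  have key2 : ∀ s ∈ Set.Icc (0:ℝ) 1, f 0 s = g 0 s := by
    rintro s ⟨hs0, hs1⟩
    rcases eq_or_lt_of_le hs0 with h0 | h0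
    · rw [← h0]; exact h00
    obtain ⟨m, σ, hσ, hσ0, hσ1⟩ := exists_partition h0 hs1
    have hs' := (hsum0 1 (fun i => if i = 0 then (0:ℝ) else 1) m σ trivial_partition hσ).2.1
    unfold wSum2J at hs'
    have hterm := (Finset.sum_eq_zero_iff_of_nonneg
      (fun j _ => Real.rpow_nonneg dist_nonneg p)).mp hs' 0 (Finset.mem_range.mpr hσ.1)
    simp only [zero_add] at hterm
    rw [hσ0, hσ1] at hterm
    have hd0 : dist (f 0 s + g 0 0) (f 0 0 + g 0 s) = 0 :=
      (Real.rpow_eq_zero dist_nonneg hp.ne').mp hterm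
    have heq : f 0 s + g 0 0 = f 0 0 + g 0 s := dist_eq_zero.mp hd0
    have heq2 : f 0 s + g 0 0 = g 0 s + g 0 0 := by rw [heq, h00, add_comm]
    have : dist (f 0 s) (g 0 s) = 0 := by
      rw [← hd (f 0 s) (g 0 s) (g 0 0), heq2, dist_self]
    exact dist_eq_zero.mp this
  -- interior
  rintro t ⟨ht0, ht1⟩ s ⟨hs0, hs1⟩
  rcases eq_or_lt_of_le ht0 with h0t | h0t
  · rw [← h0t]; exact key2 s ⟨hs0, hs1⟩
  rcases eq_or_lt_of_le hs0 with h0s | h0s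
  · rw [← h0s]; exact key1 t ⟨ht0, ht1⟩
  obtain ⟨n, τ, hτ, hτ0, hτ1⟩ := exists_partition h0t ht1
  obtain ⟨m, σ, hσ, hσ0, hσ1⟩ := exists_partition h0s hs1
  have hs12 := (hsum0 n τ m σ hτ hσ).2.2
  unfold wSum12J at hs12
  have houter := (Finset.sum_eq_zero_iff_of_nonneg
    (fun j _ => Finset.sum_nonneg fun i _ => Real.rpow_nonneg dist_nonneg p)).mp
    hs12 0 (Finset.mem_range.mpr hσ.1)
  have hinner := (Finset.sum_eq_zero_iff_of_nonneg
    (fun i _ => Real.rpow_nonneg dist_nonneg p)).mp houter 0 (Finset.mem_range.mpr hτ.1)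
  simp only [zero_add] at hinner
  rw [hτ0, hτ1, hσ0, hσ1] at hinner
  have hd0 : dist (f t s + f 0 0 + g t 0 + g 0 s) (g t s + g 0 0 + f t 0 + f 0 s) = 0 :=
    (Real.rpow_eq_zero dist_nonneg hp.ne').mp hinner
  have heq : f t s + f 0 0 + g t 0 + g 0 s = g t s + g 0 0 + f t 0 + f 0 s :=
    dist_eq_zero.mp hd0
  have hft0 : f t 0 = g t 0 := key1 t ⟨ht0, ht1⟩
  have hf0s : f 0 s = g 0 s := key2 s ⟨hs0, hs1⟩
  have heq2 : f t s + (f 0 0 + (g t 0 + g 0 s)) = g t s + (f 0 0 + (g t 0 + g 0 s)) := by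
    calc f t s + (f 0 0 + (g t 0 + g 0 s)) = f t s + f 0 0 + g t 0 + g 0 s := by
          simp only [add_assoc]
      _ = g t s + g 0 0 + f t 0 + f 0 s := heq
      _ = g t s + (f 0 0 + (g t 0 + g 0 s)) := by
          rw [← h00, hft0, hf0s]; simp only [add_assoc]
  have hfin : dist (f t s) (g t s) = 0 := by
    rw [← hd (f t s) (g t s) (f 0 0 + (g t 0 + g 0 s)), heq2, dist_self]
  exact dist_eq_zero.mp hfin
end

section
/- Let p ∈ (1,∞), m,n ∈ ℕ, and (M,d,+) a complete metric semigroup. Define on M^{(n+1)(m+1)} (indexed by pairs (i,j), 0≤i≤n, 0≤j≤m) the function ρ'_p(ξ,δ) = d(ξ_{00},δ_{00}) + (Σ_{i=1}^n d^p(ξ_{i0}+δ_{i-1,0}, ξ_{i-1,0}+δ_{i0}))^{1/p} + (Σ_{j=1}^m d^p(ξ_{0j}+δ_{0,j-1}, ξ_{0,j-1}+δ_{0j}))^{1/p} + (Σ_jΣ_i d^p(ξ_{ij}+ξ_{i-1,j-1}+δ_{i-1,j}+δ_{i,j-1}, ξ_{i-1,j}+ξ_{i,j-1}+δ_{ij}+δ_{i-1,j-1}))^{1/p}.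 Then ρ'_p is a metric and (M^{(n+1)(m+1)}, ρ'_p) is a complete metric space. -/
/-!
Reading a pair `(a, b) : M × M` as the formal difference `a - b`, translation invariance makes
`diffDist (a, b) (a', b') = d(a + b', b + a')` a pseudometric on `M × M`. Then `ρ'_p` is `d` on
the corner entry plus `ℓ^p`-sums of `diffDist` over the first increments along the two edges and
over the mixed second increments of the cells, and Minkowski's inequality gives the triangle
inequality. Conversely each entry is recovered from the corner by adding increments, which gives
`d(ξ i j, δ i j) ≤ 4 ^ (i + j) ρ'_p(ξ, δ)`: a `ρ'_p`-Cauchy sequence converges entrywise, and as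
`ρ'_p` is continuous under entrywise convergence, the entrywise limit is its `ρ'_p`-limit.
-/

open Finset

variable {M : Type*} [MetricSpace M] [AddCommSemigroup M]

/-- The metric `ρ'_p` on `M^{(n+1)(m+1)}`, arrays being represented by functions
`ℕ → ℕ → M` restricted to indices `0 ≤ i ≤ n`, `0 ≤ j ≤ m`. -/
noncomputable def rhoArr (p : ℝ) (n m : ℕ) (ξ δ : ℕ → ℕ → M) : ℝ :=
  dist (ξ 0 0) (δ 0 0)
  + (∑ i ∈ range n, dist (ξ (i + 1) 0 + δ i 0) (ξ i 0 + δ (i + 1) 0) ^ p) ^ (1 / p)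
  + (∑ j ∈ range m, dist (ξ 0 (j + 1) + δ 0 j) (ξ 0 j + δ 0 (j + 1)) ^ p) ^ (1 / p)
  + (∑ j ∈ range m, ∑ i ∈ range n,
      dist (ξ (i + 1) (j + 1) + ξ i j + δ i (j + 1) + δ (i + 1) j)
           (ξ i (j + 1) + ξ (i + 1) j + δ (i + 1) (j + 1) + δ i j) ^ p) ^ (1 / p)

open Filter Topology

theorem dist_add_add_le_of_invariant (hd : ∀ u v w : M, dist (u + w) (v + w) = dist u v)
    (a b c e : M) : dist (a + b) (c + e) ≤ dist a c + dist b e :=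
  calc dist (a + b) (c + e) ≤ dist (a + b) (c + b) + dist (c + b) (c + e) := dist_triangle _ _ _
    _ = dist a c + dist b e := by rw [hd, add_comm c b, add_comm c e, hd]

theorem dist_le_dist_add_add_of_invariant (hd : ∀ u v w : M, dist (u + w) (v + w) = dist u v)
    (a b c e : M) : dist a c ≤ dist (a + b) (c + e) + dist b e :=
  calc dist a c = dist (a + e) (c + e) := (hd a c e).symm
    _ ≤ dist (a + e) (a + b) + dist (a + b) (c + e) := dist_triangle _ _ _
    _ = dist (a + b) (c + e) + dist b e := by
      rw [add_comm a e, add_comm a b, hd, dist_comm e b, add_comm]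

theorem continuousAdd_of_invariant (hd : ∀ u v w : M, dist (u + w) (v + w) = dist u v) :
    ContinuousAdd M where
  continuous_add := (LipschitzWith.of_dist_le' (K := 2) fun x y =>
    calc dist (x.1 + x.2) (y.1 + y.2) ≤ dist x.1 y.1 + dist x.2 y.2 :=
          dist_add_add_le_of_invariant hd _ _ _ _
      _ ≤ 2 * dist x y := by
          rw [two_mul, Prod.dist_eq]
          exact add_le_add (le_max_left _ _) (le_max_right _ _)).continuous

def diffDist (x y : M × M) : ℝ := dist (x.1 + y.2) (x.2 + y.1)

theorem diffDist_nonneg (x y : M × M) : 0 ≤ diffDist x y := dist_nonneg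

theorem diffDist_self (x : M × M) : diffDist x x = 0 := by
  rw [diffDist, add_comm, dist_self]

theorem diffDist_comm (x y : M × M) : diffDist x y = diffDist y x := by
  rw [diffDist, diffDist, dist_comm, add_comm x.2, add_comm x.1]

theorem diffDist_triangle (hd : ∀ u v w : M, dist (u + w) (v + w) = dist u v) (x y z : M × M) :
    diffDist x z ≤ diffDist x y + diffDist y z := by
  have h : dist (x.1 + z.2) (x.2 + z.1)
      = dist ((x.1 + y.2) + (y.1 + z.2)) ((x.2 + y.1) + (y.2 + z.1)) := by
    rw [show (x.1 + y.2) + (y.1 + z.2) = (x.1 + z.2) + (y.1 + y.2) by ac_rfl,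
      show (x.2 + y.1) + (y.2 + z.1) = (x.2 + z.1) + (y.1 + y.2) by ac_rfl, hd]
  rw [diffDist, h]
  exact dist_add_add_le_of_invariant hd _ _ _ _

theorem dist_fst_le_diffDist_add (hd : ∀ u v w : M, dist (u + w) (v + w) = dist u v)
    (x y : M × M) : dist x.1 y.1 ≤ diffDist x y + dist x.2 y.2 := by
  have h := dist_le_dist_add_add_of_invariant hd x.1 y.2 y.1 x.2
  rwa [add_comm y.1, dist_comm y.2] at h

theorem Filter.Tendsto.diffDist (hd : ∀ u v w : M, dist (u + w) (v + w) = dist u v)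
    {α : Type*} {l : Filter α} {x y : α → M × M} {x₀ y₀ : M × M}
    (hx : Tendsto x l (𝓝 x₀)) (hy : Tendsto y l (𝓝 y₀)) :
    Tendsto (fun u => _root_.diffDist (x u) (y u)) l (𝓝 (_root_.diffDist x₀ y₀)) := by
  have := continuousAdd_of_invariant hd
  exact (hx.fst_nhds.add hy.snd_nhds).dist (hx.snd_nhds.add hy.fst_nhds)

section IncrDist

variable {ι : Type*} {p : ℝ} {s : Finset ι}

noncomputable def incrDist (p : ℝ) (s : Finset ι) (a b : ι → M × M) : ℝ :=
  (∑ k ∈ s, diffDist (a k) (b k) ^ p) ^ (1 / p)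

theorem incrDist_nonneg (a b : ι → M × M) : 0 ≤ incrDist p s a b :=
  Real.rpow_nonneg (sum_nonneg fun _ _ => Real.rpow_nonneg (diffDist_nonneg _ _) p) _

theorem incrDist_comm (a b : ι → M × M) : incrDist p s a b = incrDist p s b a := by
  simp only [incrDist, diffDist_comm (a _)]

theorem incrDist_self (hp : p ≠ 0) (a : ι → M × M) : incrDist p s a a = 0 := by
  simp [incrDist, diffDist_self, Real.zero_rpow hp, hp]

theorem diffDist_le_incrDist (hp : 0 < p) (a b : ι → M × M) {k : ι} (hk : k ∈ s) :
    diffDist (a k) (b k) ≤ incrDist p s a b := by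
  calc diffDist (a k) (b k) = (diffDist (a k) (b k) ^ p) ^ (1 / p) := by
        rw [one_div, Real.rpow_rpow_inv (diffDist_nonneg _ _) hp.ne']
    _ ≤ incrDist p s a b :=
        Real.rpow_le_rpow (Real.rpow_nonneg (diffDist_nonneg _ _) p)
          (single_le_sum (f := fun k => diffDist (a k) (b k) ^ p)
            (fun k _ => Real.rpow_nonneg (diffDist_nonneg _ _) p) hk) (by positivity)

theorem incrDist_triangle (hd : ∀ u v w : M, dist (u + w) (v + w) = dist u v) (hp : 1 ≤ p)
    (a b c : ι → M × M) : incrDist p s a c ≤ incrDist p s a b + incrDist p s b c :=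
  calc incrDist p s a c
        ≤ (∑ k ∈ s, (diffDist (a k) (b k) + diffDist (b k) (c k)) ^ p) ^ (1 / p) := by
        refine Real.rpow_le_rpow (sum_nonneg fun k _ => Real.rpow_nonneg (diffDist_nonneg _ _) p)
          (sum_le_sum fun k _ => ?_) (by positivity)
        exact Real.rpow_le_rpow (diffDist_nonneg _ _) (diffDist_triangle hd _ _ _) (by positivity)
    _ ≤ incrDist p s a b + incrDist p s b c :=
        Real.Lp_add_le_of_nonneg s hp (fun _ _ => diffDist_nonneg _ _)
          (fun _ _ => diffDist_nonneg _ _)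

theorem Filter.Tendsto.incrDist (hd : ∀ u v w : M, dist (u + w) (v + w) = dist u v) (hp : 0 ≤ p)
    {α : Type*} {l : Filter α} {a b : α → ι → M × M} {a₀ b₀ : ι → M × M}
    (ha : ∀ k ∈ s, Tendsto (fun u => a u k) l (𝓝 (a₀ k)))
    (hb : ∀ k ∈ s, Tendsto (fun u => b u k) l (𝓝 (b₀ k))) :
    Tendsto (fun u => _root_.incrDist p s (a u) (b u)) l (𝓝 (_root_.incrDist p s a₀ b₀)) :=
  (tendsto_finsetSum s fun k hk =>
    ((ha k hk).diffDist hd (hb k hk)).rpow_const (Or.inr hp)).rpow_const (Or.inr (by positivity))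

end IncrDist

theorem le_four_pow_mul_of_grid {g : ℕ → ℕ → ℝ} {r : ℝ} {n m : ℕ} (hr : 0 ≤ r)
    (h00 : g 0 0 ≤ r) (hrow : ∀ i < n, g (i + 1) 0 ≤ r + g i 0)
    (hcol : ∀ j < m, g 0 (j + 1) ≤ r + g 0 j)
    (hsq : ∀ i < n, ∀ j < m, g (i + 1) (j + 1) ≤ r + g i j + g i (j + 1) + g (i + 1) j) :
    ∀ i ≤ n, ∀ j ≤ m, g i j ≤ 4 ^ (i + j) * r := by
  intro i hi j hj
  induction j generalizing i with
  | zero =>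
    induction i with
    | zero => simpa using h00
    | succ i ih =>
      have hprev := ih (by omega)
      have hpow : (1 : ℝ) ≤ 4 ^ i := one_le_pow₀ (by norm_num)
      rw [add_zero] at hprev ⊢
      rw [pow_succ]
      nlinarith [hrow i hi]
  | succ j ihj =>
    induction i with
    | zero =>
      have hprev := ihj 0 hi (by omega)
      have hpow : (1 : ℝ) ≤ 4 ^ j := one_le_pow₀ (by norm_num)
      rw [zero_add] at hprev ⊢
      rw [pow_succ]
      nlinarith [hcol j hj]
    | succ i ihi =>
      have hdiag := ihj i (by omega) (by omega)
      have hleft := ihi (by omega)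
      have hbelow := ihj (i + 1) hi (by omega)
      have hpow : (1 : ℝ) ≤ 4 ^ (i + j) := one_le_pow₀ (by norm_num)
      rw [show i + (j + 1) = i + j + 1 by ring, pow_succ] at hleft
      rw [show i + 1 + j = i + j + 1 by ring, pow_succ] at hbelow
      rw [show i + 1 + (j + 1) = i + j + 2 by ring, pow_add]
      nlinarith [hsq i hi j hj]

def incr (f : ℕ → M) (i : ℕ) : M × M := (f (i + 1), f i)

def mixedIncr (ξ : ℕ → ℕ → M) (k : ℕ × ℕ) : M × M :=
  (ξ (k.1 + 1) (k.2 + 1) + ξ k.1 k.2, ξ k.1 (k.2 + 1) + ξ (k.1 + 1) k.2)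

theorem rhoArr_eq (p : ℝ) (n m : ℕ) (ξ δ : ℕ → ℕ → M) :
    rhoArr p n m ξ δ = dist (ξ 0 0) (δ 0 0)
      + incrDist p (range n) (incr (ξ · 0)) (incr (δ · 0))
      + incrDist p (range m) (incr (ξ 0)) (incr (δ 0))
      + incrDist p (range n ×ˢ range m) (mixedIncr ξ) (mixedIncr δ) := by
  simp only [rhoArr, incrDist, diffDist, incr, mixedIncr, sum_product_right, add_assoc]

theorem rhoArr_nonneg (p : ℝ) (n m : ℕ) (ξ δ : ℕ → ℕ → M) : 0 ≤ rhoArr p n m ξ δ := by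
  rw [rhoArr_eq]
  have := incrDist_nonneg (p := p) (s := range n) (incr (ξ · 0)) (incr (δ · 0))
  have := incrDist_nonneg (p := p) (s := range m) (incr (ξ 0)) (incr (δ 0))
  have := incrDist_nonneg (p := p) (s := range n ×ˢ range m) (mixedIncr ξ) (mixedIncr δ)
  positivity

theorem rhoArr_comm (p : ℝ) (n m : ℕ) (ξ δ : ℕ → ℕ → M) :
    rhoArr p n m ξ δ = rhoArr p n m δ ξ := by
  rw [rhoArr_eq, rhoArr_eq, dist_comm, incrDist_comm (incr (ξ · 0)), incrDist_comm (incr (ξ 0)),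
    incrDist_comm (mixedIncr ξ)]

section RhoArr

variable {p : ℝ} {n m : ℕ}

theorem rhoArr_self (hp : p ≠ 0) (ξ : ℕ → ℕ → M) : rhoArr p n m ξ ξ = 0 := by
  simp only [rhoArr_eq, dist_self, incrDist_self hp, add_zero]

theorem rhoArr_triangle (hd : ∀ u v w : M, dist (u + w) (v + w) = dist u v) (hp : 1 ≤ p)
    (ξ δ η : ℕ → ℕ → M) :
    rhoArr p n m ξ δ ≤ rhoArr p n m ξ η + rhoArr p n m η δ := by
  simp only [rhoArr_eq]
  have := dist_triangle (ξ 0 0) (η 0 0) (δ 0 0)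
  have := incrDist_triangle hd hp (s := range n) (incr (ξ · 0)) (incr (η · 0)) (incr (δ · 0))
  have := incrDist_triangle hd hp (s := range m) (incr (ξ 0)) (incr (η 0)) (incr (δ 0))
  have := incrDist_triangle hd hp (s := range n ×ˢ range m)
    (mixedIncr ξ) (mixedIncr η) (mixedIncr δ)
  linarith

theorem tendsto_rhoArr (hd : ∀ u v w : M, dist (u + w) (v + w) = dist u v) (hp : 0 ≤ p)
    {α : Type*} {l : Filter α} {F G : α → ℕ → ℕ → M} {ξ δ : ℕ → ℕ → M}
    (hF : ∀ i ≤ n, ∀ j ≤ m, Tendsto (fun u => F u i j) l (𝓝 (ξ i j)))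
    (hG : ∀ i ≤ n, ∀ j ≤ m, Tendsto (fun u => G u i j) l (𝓝 (δ i j))) :
    Tendsto (fun u => rhoArr p n m (F u) (G u)) l (𝓝 (rhoArr p n m ξ δ)) := by
  have hRow {H : α → ℕ → ℕ → M} {η : ℕ → ℕ → M}
      (hH : ∀ i ≤ n, ∀ j ≤ m, Tendsto (fun u => H u i j) l (𝓝 (η i j))) :
      ∀ i ∈ range n, Tendsto (fun u => incr (H u · 0) i) l (𝓝 (incr (η · 0) i)) := by
    intro i hi
    have hi := mem_range.1 hi
    exact (hH _ hi _ m.zero_le).prodMk_nhds (hH _ hi.le _ m.zero_le)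
  have hCol {H : α → ℕ → ℕ → M} {η : ℕ → ℕ → M}
      (hH : ∀ i ≤ n, ∀ j ≤ m, Tendsto (fun u => H u i j) l (𝓝 (η i j))) :
      ∀ j ∈ range m, Tendsto (fun u => incr (H u 0) j) l (𝓝 (incr (η 0) j)) := by
    intro j hj
    have hj := mem_range.1 hj
    exact (hH _ n.zero_le _ hj).prodMk_nhds (hH _ n.zero_le _ hj.le)
  have hSq {H : α → ℕ → ℕ → M} {η : ℕ → ℕ → M}
      (hH : ∀ i ≤ n, ∀ j ≤ m, Tendsto (fun u => H u i j) l (𝓝 (η i j))) :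
      ∀ k ∈ range n ×ˢ range m, Tendsto (fun u => mixedIncr (H u) k) l (𝓝 (mixedIncr η k)) := by
    intro k hk
    obtain ⟨hi, hj⟩ := mem_product.1 hk
    have hi := mem_range.1 hi
    have hj := mem_range.1 hj
    have := continuousAdd_of_invariant hd
    exact ((hH _ hi _ hj).add (hH _ hi.le _ hj.le)).prodMk_nhds
      ((hH _ hi.le _ hj).add (hH _ hi _ hj.le))
  simp only [rhoArr_eq]
  exact ((((hF 0 n.zero_le 0 m.zero_le).dist (hG 0 n.zero_le 0 m.zero_le)).add
    (Tendsto.incrDist hd hp (hRow hF) (hRow hG))).add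
    (Tendsto.incrDist hd hp (hCol hF) (hCol hG))).add (Tendsto.incrDist hd hp (hSq hF) (hSq hG))

theorem dist_le_four_pow_mul_rhoArr (hd : ∀ u v w : M, dist (u + w) (v + w) = dist u v)
    (hp : 0 < p) (ξ δ : ℕ → ℕ → M) :
    ∀ i ≤ n, ∀ j ≤ m, dist (ξ i j) (δ i j) ≤ 4 ^ (i + j) * rhoArr p n m ξ δ := by
  have hρ := rhoArr_eq p n m ξ δ
  have h00 := dist_nonneg (x := ξ 0 0) (y := δ 0 0)
  have hrow := incrDist_nonneg (p := p) (s := range n) (incr (ξ · 0)) (incr (δ · 0))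
  have hcol := incrDist_nonneg (p := p) (s := range m) (incr (ξ 0)) (incr (δ 0))
  have hsq := incrDist_nonneg (p := p) (s := range n ×ˢ range m) (mixedIncr ξ) (mixedIncr δ)
  refine le_four_pow_mul_of_grid (rhoArr_nonneg p n m ξ δ) (by linarith)
    (fun i hi => ?_) (fun j hj => ?_) (fun i hi j hj => ?_)
  · have h₁ := diffDist_le_incrDist hp (incr (ξ · 0)) (incr (δ · 0)) (mem_range.2 hi)
    have h₂ : dist (ξ (i + 1) 0) (δ (i + 1) 0)
        ≤ diffDist (incr (ξ · 0) i) (incr (δ · 0) i) + dist (ξ i 0) (δ i 0) :=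
      dist_fst_le_diffDist_add hd (incr (ξ · 0) i) (incr (δ · 0) i)
    linarith
  · have h₁ := diffDist_le_incrDist hp (incr (ξ 0)) (incr (δ 0)) (mem_range.2 hj)
    have h₂ : dist (ξ 0 (j + 1)) (δ 0 (j + 1))
        ≤ diffDist (incr (ξ 0) j) (incr (δ 0) j) + dist (ξ 0 j) (δ 0 j) :=
      dist_fst_le_diffDist_add hd (incr (ξ 0) j) (incr (δ 0) j)
    linarith
  · have h₁ := diffDist_le_incrDist hp (mixedIncr ξ) (mixedIncr δ) (k := (i, j))
      (mem_product.2 ⟨mem_range.2 hi, mem_range.2 hj⟩)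
    have h₂ : dist (ξ (i + 1) (j + 1) + ξ i j) (δ (i + 1) (j + 1) + δ i j)
        ≤ diffDist (mixedIncr ξ (i, j)) (mixedIncr δ (i, j))
          + dist (ξ i (j + 1) + ξ (i + 1) j) (δ i (j + 1) + δ (i + 1) j) :=
      dist_fst_le_diffDist_add hd (mixedIncr ξ (i, j)) (mixedIncr δ (i, j))
    have h₃ := dist_le_dist_add_add_of_invariant hd (ξ (i + 1) (j + 1)) (ξ i j)
      (δ (i + 1) (j + 1)) (δ i j)
    have h₄ := dist_add_add_le_of_invariant hd (ξ i (j + 1)) (ξ (i + 1) j)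
      (δ i (j + 1)) (δ (i + 1) j)
    linarith

theorem rhoArr_eq_zero_iff (hd : ∀ u v w : M, dist (u + w) (v + w) = dist u v) (hp : 0 < p)
    (ξ δ : ℕ → ℕ → M) : rhoArr p n m ξ δ = 0 ↔ ∀ i ≤ n, ∀ j ≤ m, ξ i j = δ i j := by
  refine ⟨fun h i hi j hj => dist_le_zero.1 ?_, fun h => ?_⟩
  · simpa [h] using dist_le_four_pow_mul_rhoArr hd hp ξ δ i hi j hj
  · -- `ρ(ξ, δ)` is the limit of `ρ` along the constant sequences `ξ → δ` and `δ → δ`.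
    have hlim := tendsto_rhoArr hd hp.le (l := (atTop : Filter ℕ))
      (F := fun _ => ξ) (G := fun _ => δ)
      (fun i hi j hj => by rw [h i hi j hj]; exact tendsto_const_nhds)
      (fun _ _ _ _ => tendsto_const_nhds)
    rw [tendsto_const_nhds_iff, rhoArr_self hp.ne'] at hlim
    exact hlim

theorem cauchySeq_apply_of_rhoArr (hd : ∀ u v w : M, dist (u + w) (v + w) = dist u v)
    (hp : 0 < p) {F : ℕ → ℕ → ℕ → M}
    (hF : ∀ ε > (0 : ℝ), ∃ N, ∀ u ≥ N, ∀ v ≥ N, rhoArr p n m (F u) (F v) < ε)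
    {i j : ℕ} (hi : i ≤ n) (hj : j ≤ m) : CauchySeq fun u => F u i j := by
  rw [Metric.cauchySeq_iff]
  intro ε hε
  obtain ⟨N, hN⟩ := hF (ε / 4 ^ (i + j)) (by positivity)
  refine ⟨N, fun u hu v hv => ?_⟩
  calc dist (F u i j) (F v i j) ≤ 4 ^ (i + j) * rhoArr p n m (F u) (F v) :=
        dist_le_four_pow_mul_rhoArr hd hp _ _ i hi j hj
    _ < 4 ^ (i + j) * (ε / 4 ^ (i + j)) := by gcongr; exact hN u hu v hv
    _ = ε := by field_simp

theorem exists_tendsto_rhoArr_of_cauchy [CompleteSpace M]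
    (hd : ∀ u v w : M, dist (u + w) (v + w) = dist u v) (hp : 0 < p) (F : ℕ → ℕ → ℕ → M)
    (hF : ∀ ε > (0 : ℝ), ∃ N, ∀ u ≥ N, ∀ v ≥ N, rhoArr p n m (F u) (F v) < ε) :
    ∃ ξ : ℕ → ℕ → M, Tendsto (fun u => rhoArr p n m (F u) ξ) atTop (𝓝 0) := by
  have : Nonempty M := ⟨F 0 0 0⟩
  choose! ξ hξ using fun i (hi : i ≤ n) j (hj : j ≤ m) =>
    cauchySeq_tendsto_of_complete (cauchySeq_apply_of_rhoArr hd hp hF hi hj)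
  refine ⟨ξ, ?_⟩
  simpa only [rhoArr_self hp.ne'] using
    tendsto_rhoArr hd hp.le hξ fun i hi j hj => tendsto_const_nhds (x := ξ i j)

end RhoArr

/-- For `p ∈ (1,∞)` and a complete metric semigroup `M`, `ρ'_p` is a metric on
`M^{(n+1)(m+1)}` and the resulting metric space is complete. -/
theorem rhoArr_complete_metric [CompleteSpace M] (p : ℝ) (hp : 1 < p) (n m : ℕ)
    (hd : ∀ u v w : M, dist (u + w) (v + w) = dist u v) :
    (∀ ξ δ : ℕ → ℕ → M, 0 ≤ rhoArr p n m ξ δ)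
    ∧ (∀ ξ δ : ℕ → ℕ → M,
        (rhoArr p n m ξ δ = 0 ↔ ∀ i ≤ n, ∀ j ≤ m, ξ i j = δ i j))
    ∧ (∀ ξ δ : ℕ → ℕ → M, rhoArr p n m ξ δ = rhoArr p n m δ ξ)
    ∧ (∀ ξ δ h : ℕ → ℕ → M, rhoArr p n m ξ δ ≤ rhoArr p n m ξ h + rhoArr p n m h δ)
    ∧ (∀ F : ℕ → ℕ → ℕ → M,
        (∀ ε > (0:ℝ), ∃ N, ∀ u ≥ N, ∀ v ≥ N, rhoArr p n m (F u) (F v) < ε) →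
        ∃ ξ : ℕ → ℕ → M,
          Filter.Tendsto (fun u => rhoArr p n m (F u) ξ) Filter.atTop (nhds 0)) := by
  have hp₀ : 0 < p := zero_lt_one.trans hp
  exact ⟨rhoArr_nonneg p n m, rhoArr_eq_zero_iff hd hp₀, rhoArr_comm p n m,
    rhoArr_triangle hd hp.le, exists_tendsto_rhoArr_of_cauchy hd hp₀⟩
end

section
/- Let p ∈ (1,∞) and (M,d,+) a complete metric semigroup. The bivariate Riesz bounded p-variation space (RBV_p(I×I,M), ρ_R), with ρ_R(f,g) = d(f(0,0),g(0,0)) + V_p^R(f,g), is a complete metric space. -/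
open Finset

variable {M : Type*} [MetricSpace M] [AddCommSemigroup M]

noncomputable def rSum1 (p : ℝ) (f : ℝ → ℝ → M) (n : ℕ) (t : ℕ → ℝ) : ℝ :=
  (∑ i ∈ range n,
    dist (f (t (i + 1)) 0) (f (t i) 0) ^ p / (t (i + 1) - t i) ^ (p - 1)) ^ (1 / p)

noncomputable def rSum2 (p : ℝ) (f : ℝ → ℝ → M) (m : ℕ) (s : ℕ → ℝ) : ℝ :=
  (∑ j ∈ range m,
    dist (f 0 (s (j + 1))) (f 0 (s j)) ^ p / (s (j + 1) - s j) ^ (p - 1)) ^ (1 / p)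

noncomputable def rSum12 (p : ℝ) (f : ℝ → ℝ → M) (n : ℕ) (t : ℕ → ℝ)
    (m : ℕ) (s : ℕ → ℝ) : ℝ :=
  (∑ j ∈ range m, ∑ i ∈ range n,
    dist (f (t (i + 1)) (s (j + 1)) + f (t i) (s j))
         (f (t (i + 1)) (s j) + f (t i) (s (j + 1))) ^ p
      / ((t (i + 1) - t i) ^ (p - 1) * (s (j + 1) - s j) ^ (p - 1))) ^ (1 / p)

noncomputable def rSum1J (p : ℝ) (f g : ℝ → ℝ → M) (n : ℕ) (t : ℕ → ℝ) : ℝ :=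
  (∑ i ∈ range n,
    dist (f (t (i + 1)) 0 + g (t i) 0) (f (t i) 0 + g (t (i + 1)) 0) ^ p
      / (t (i + 1) - t i) ^ (p - 1)) ^ (1 / p)

noncomputable def rSum2J (p : ℝ) (f g : ℝ → ℝ → M) (m : ℕ) (s : ℕ → ℝ) : ℝ :=
  (∑ j ∈ range m,
    dist (f 0 (s (j + 1)) + g 0 (s j)) (f 0 (s j) + g 0 (s (j + 1))) ^ p
      / (s (j + 1) - s j) ^ (p - 1)) ^ (1 / p)

noncomputable def rSum12J (p : ℝ) (f g : ℝ → ℝ → M) (n : ℕ) (t : ℕ → ℝ)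
    (m : ℕ) (s : ℕ → ℝ) : ℝ :=
  (∑ j ∈ range m, ∑ i ∈ range n,
    dist (f (t (i + 1)) (s (j + 1)) + f (t i) (s j)
            + g (t (i + 1)) (s j) + g (t i) (s (j + 1)))
         (g (t (i + 1)) (s (j + 1)) + g (t i) (s j)
            + f (t (i + 1)) (s j) + f (t i) (s (j + 1))) ^ p
      / ((t (i + 1) - t i) ^ (p - 1) * (s (j + 1) - s j) ^ (p - 1))) ^ (1 / p)

def rSet1 (p : ℝ) (f : ℝ → ℝ → M) : Set ℝ :=
  {x | ∃ n t, IsPartition n t ∧ x = rSum1 p f n t}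

def rSet2 (p : ℝ) (f : ℝ → ℝ → M) : Set ℝ :=
  {x | ∃ m s, IsPartition m s ∧ x = rSum2 p f m s}

def rSet12 (p : ℝ) (f : ℝ → ℝ → M) : Set ℝ :=
  {x | ∃ n t m s, IsPartition n t ∧ IsPartition m s ∧ x = rSum12 p f n t m s}

/-- Total Riesz `p`-variation `V_p^R(f)`. -/
noncomputable def VpR (p : ℝ) (f : ℝ → ℝ → M) : ℝ :=
  sSup (rSet1 p f) + sSup (rSet2 p f) + sSup (rSet12 p f)

/-- `f` has bounded bivariate Riesz `p`-variation. -/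
def MemRBV (p : ℝ) (f : ℝ → ℝ → M) : Prop :=
  BddAbove (rSet1 p f) ∧ BddAbove (rSet2 p f) ∧ BddAbove (rSet12 p f)

/-- Joint Riesz variation over a fixed pair of partitions, `V_p^R(f,g,Π×Π*)`. -/
noncomputable def VpRPart (p : ℝ) (f g : ℝ → ℝ → M) (n : ℕ) (t : ℕ → ℝ)
    (m : ℕ) (s : ℕ → ℝ) : ℝ :=
  rSum1J p f g n t + rSum2J p f g m s + rSum12J p f g n t m s

def rSetJ (p : ℝ) (f g : ℝ → ℝ → M) : Set ℝ :=
  {x | ∃ n t m s, IsPartition n t ∧ IsPartition m s ∧ x = VpRPart p f g n t m s}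

/-- The joint Riesz `p`-variation `V_p^R(f,g)`. -/
noncomputable def VpRJ (p : ℝ) (f g : ℝ → ℝ → M) : ℝ := sSup (rSetJ p f g)

/-- The metric `ρ_R(f,g) = d(f(0,0), g(0,0)) + V_p^R(f,g)`. -/
noncomputable def rhoR (p : ℝ) (f g : ℝ → ℝ → M) : ℝ :=
  dist (f 0 0) (g 0 0) + VpRJ p f g

section Helpers
open Filter

namespace RBVAux
set_option linter.unusedSectionVars false
set_option linter.unusedVariables false

/-! ### Partition lemmas -/

lemma part_mono {n : ℕ} {t : ℕ → ℝ} (h : IsPartition n t) {i j : ℕ} (hij : i ≤ j) (hj : j ≤ n) :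
    t i ≤ t j := by
  induction j with
  | zero => cases Nat.le_zero.mp hij; exact le_rfl
  | succ k ih =>
    rcases Nat.eq_or_lt_of_le hij with heq | hlt
    · rw [heq]
    · exact (ih (Nat.lt_succ_iff.mp hlt) (Nat.le_of_succ_le hj)).trans
        (h.2.2.2 k (Nat.lt_of_succ_le hj)).le

lemma part_mem {n : ℕ} {t : ℕ → ℝ} (h : IsPartition n t) {i : ℕ} (hi : i ≤ n) :
    t i ∈ Set.Icc (0:ℝ) 1 := by
  constructor
  · have := part_mono h (Nat.zero_le i) hi; rw [h.2.1] at this; exact this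
  · have := part_mono h hi le_rfl; rw [h.2.2.1] at this; exact this

lemma gap_pos {n : ℕ} {t : ℕ → ℝ} (h : IsPartition n t) {i : ℕ} (hi : i < n) :
    0 < t (i + 1) - t i := sub_pos.mpr (h.2.2.2 i hi)

lemma gap_le_one {n : ℕ} {t : ℕ → ℝ} (h : IsPartition n t) {i : ℕ} (hi : i < n) :
    t (i + 1) - t i ≤ 1 := by
  have h1 := (part_mem h (le_of_lt hi)).1
  have h2 := (part_mem h (Nat.succ_le_of_lt hi)).2
  linarith

lemma part_triv : IsPartition 1 (fun i => if i = 0 then (0:ℝ) else 1) := by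
  refine ⟨one_pos, by simp, by simp, ?_⟩
  intro i hi
  interval_cases i
  norm_num

/-- A partition whose first gap is `(0, x)`. -/
lemma part_start {x : ℝ} (h0 : 0 < x) (h1 : x ≤ 1) :
    ∃ n τ, IsPartition n τ ∧ τ 0 = 0 ∧ τ 1 = x ∧ 0 < n := by
  rcases eq_or_lt_of_le h1 with heq | hlt
  · exact ⟨1, fun i => if i = 0 then 0 else 1, part_triv, by simp, by simp [heq], one_pos⟩
  · refine ⟨2, fun i => if i = 0 then 0 else if i = 1 then x else 1, ?_, by simp, by simp, two_pos⟩
    refine ⟨two_pos, by simp, by norm_num, ?_⟩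
    intro i hi
    interval_cases i <;> simp [h0, hlt]

/-! ### Real-power lemmas -/

variable {p : ℝ}

lemma conv_pow (hp : 1 < p) {D w : ℝ} (hD : 0 ≤ D) (hw : 0 < w) :
    (D * w ^ (-(1/p))) ^ p = D ^ p / w := by
  have hu : (0:ℝ) ≤ w ^ (-(1/p)) := Real.rpow_nonneg hw.le _
  rw [Real.mul_rpow hD hu, ← Real.rpow_mul hw.le]
  have h1 : -(1/p) * p = -1 := by
    have : p ≠ 0 := by positivity
    field_simp
  rw [h1, Real.rpow_neg_one, div_eq_mul_inv]

lemma term_single_le (hp : 1 < p) {ι : Type*} {S : Finset ι} {a : ι → ℝ}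
    (ha : ∀ i ∈ S, 0 ≤ a i) {k : ι} (hk : k ∈ S) {D w : ℝ} (hD : 0 ≤ D) (hw0 : 0 < w)
    (hw1 : w ≤ 1) (hak : a k = D ^ p / w ^ (p - 1)) :
    D ≤ (∑ i ∈ S, a i) ^ (1/p) := by
  have h0p : (0:ℝ) < p := lt_trans one_pos hp
  have hD1 : D ≤ (a k) ^ (1/p) := by
    rw [hak, Real.div_rpow (Real.rpow_nonneg hD _) (Real.rpow_nonneg hw0.le _),
      ← Real.rpow_mul hD, ← Real.rpow_mul hw0.le, mul_one_div, div_self h0p.ne',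
      Real.rpow_one]
    have hexp : 0 ≤ (p - 1) * (1/p) := by
      have : (0:ℝ) ≤ p - 1 := by linarith
      positivity
    have hx0 : 0 < w ^ ((p-1) * (1/p)) := Real.rpow_pos_of_pos hw0 _
    have hx1 : w ^ ((p-1) * (1/p)) ≤ 1 := Real.rpow_le_one hw0.le hw1 hexp
    rw [le_div_iff₀ hx0]
    exact mul_le_of_le_one_right hD hx1
  exact hD1.trans (Real.rpow_le_rpow (ha k hk) (Finset.single_le_sum ha hk) (by positivity))

lemma lp_sum_le (hp : 1 < p) {ι : Type*} {S : Finset ι} {w D D1 D2 : ι → ℝ}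
    (hw : ∀ i ∈ S, 0 < w i)
    (hD0 : ∀ i ∈ S, 0 ≤ D i) (hD1 : ∀ i ∈ S, 0 ≤ D1 i) (hD2 : ∀ i ∈ S, 0 ≤ D2 i)
    (hle : ∀ i ∈ S, D i ≤ D1 i + D2 i) :
    (∑ i ∈ S, D i ^ p / w i) ^ (1/p) ≤
      (∑ i ∈ S, D1 i ^ p / w i) ^ (1/p) + (∑ i ∈ S, D2 i ^ p / w i) ^ (1/p) := by
  have h0p : (0:ℝ) < p := lt_trans one_pos hp
  set u : ι → ℝ := fun i => w i ^ (-(1/p)) with hu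
  have hun : ∀ i ∈ S, 0 ≤ u i := fun i hi => Real.rpow_nonneg (hw i hi).le _
  have step1 : (∑ i ∈ S, D i ^ p / w i) ^ (1/p) ≤
      (∑ i ∈ S, |D1 i * u i + D2 i * u i| ^ p) ^ (1/p) := by
    refine Real.rpow_le_rpow ?_ (Finset.sum_le_sum ?_) (by positivity)
    · exact Finset.sum_nonneg fun i hi => div_nonneg (Real.rpow_nonneg (hD0 i hi) _) (hw i hi).le
    · intro i hi
      have h1 : D i ^ p / w i = (D i * u i) ^ p := (conv_pow hp (hD0 i hi) (hw i hi)).symm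
      rw [h1]
      have h2 : D i * u i ≤ D1 i * u i + D2 i * u i := by
        rw [← add_mul]
        exact mul_le_mul_of_nonneg_right (hle i hi) (hun i hi)
      have h3 : D1 i * u i + D2 i * u i ≤ |D1 i * u i + D2 i * u i| := le_abs_self _
      exact Real.rpow_le_rpow (mul_nonneg (hD0 i hi) (hun i hi)) (h2.trans h3) h0p.le
  have step2 := Real.Lp_add_le S (fun i => D1 i * u i) (fun i => D2 i * u i) hp.le
  have e1 : ∀ i ∈ S, |D1 i * u i| ^ p = D1 i ^ p / w i := by
    intro i hi
    rw [abs_of_nonneg (mul_nonneg (hD1 i hi) (hun i hi)), conv_pow hp (hD1 i hi) (hw i hi)]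
  have e2 : ∀ i ∈ S, |D2 i * u i| ^ p = D2 i ^ p / w i := by
    intro i hi
    rw [abs_of_nonneg (mul_nonneg (hD2 i hi) (hun i hi)), conv_pow hp (hD2 i hi) (hw i hi)]
  rw [Finset.sum_congr rfl e1, Finset.sum_congr rfl e2] at step2
  exact step1.trans step2

/-! ### Metric semigroup lemmas -/

variable {M : Type*} [MetricSpace M] [AddCommSemigroup M]
variable (hd : ∀ u v w : M, dist (u + w) (v + w) = dist u v)
include hd

lemma hd_left (u v w : M) : dist (w + u) (w + v) = dist u v := by
  rw [add_comm w u, add_comm w v, hd]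

lemma tri2 (x x' y y' : M) : dist (x + y) (x' + y') ≤ dist x x' + dist y y' := by
  calc dist (x + y) (x' + y')
      ≤ dist (x + y) (x' + y) + dist (x' + y) (x' + y') := dist_triangle _ _ _
  _ = dist x x' + dist y y' := by rw [hd, hd_left hd]

lemma tri1 (u v c c' : M) : dist u v ≤ dist (u + c) (v + c') + dist c c' := by
  calc dist u v = dist (u + c) (v + c) := (hd u v c).symm
  _ ≤ dist (u + c) (v + c') + dist (v + c') (v + c) := dist_triangle _ _ _
  _ = dist (u + c) (v + c') + dist c c' := by rw [hd_left hd, dist_comm c']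

lemma quad (a a' b b' c c' : M) :
    dist (a + b') (a' + b) ≤ dist (a + c') (a' + c) + dist (c + b') (c' + b) := by
  have e1 : dist (a + b') (a' + b) = dist (a + b' + (c + c')) (a' + b + (c + c')) :=
    (hd _ _ _).symm
  have e2 : dist (a + b' + (c + c')) (a' + c + (b' + c)) = dist (a + c') (a' + c) := by
    have h1 : a + b' + (c + c') = a + c' + (b' + c) := by ac_rfl
    rw [h1, hd]
  have e3 : dist (a' + c + (b' + c)) (a' + b + (c + c')) = dist (c + b') (c' + b) := by
    have h1 : a' + c + (b' + c) = c + b' + (a' + c) := by ac_rfl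
    have h2 : a' + b + (c + c') = c' + b + (a' + c) := by ac_rfl
    rw [h1, h2, hd]
  calc dist (a + b') (a' + b) = dist (a + b' + (c + c')) (a' + b + (c + c')) := e1
  _ ≤ dist (a + b' + (c + c')) (a' + c + (b' + c)) +
        dist (a' + c + (b' + c)) (a' + b + (c + c')) := dist_triangle _ _ _
  _ = dist (a + c') (a' + c) + dist (c + b') (c' + b) := by rw [e2, e3]

lemma triB (a a' b b' : M) : dist (a + b') (a' + b) ≤ dist a a' + dist b b' := by
  have := tri2 hd a a' b' b
  rwa [dist_comm b' b] at this

lemma triC (a a' b b' : M) : dist a a' ≤ dist (a + b') (a' + b) + dist b b' := by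
  have := tri1 hd a a' b' b
  rwa [dist_comm b' b] at this

lemma quadD (a a' b b' c c' : M) :
    dist (a + b') (b + a') ≤ dist (a + c') (c + a') + dist (c + b') (b + c') := by
  have := quad hd a a' b b' c c'
  rwa [add_comm a' b, add_comm a' c, add_comm c' b] at this

lemma quad12 (a₁ a₂ a₁' a₂' b₁ b₂ b₁' b₂' c₁ c₂ c₁' c₂' : M) :
    dist (a₁ + a₂ + b₁' + b₂') (b₁ + b₂ + a₁' + a₂') ≤
      dist (a₁ + a₂ + c₁' + c₂') (c₁ + c₂ + a₁' + a₂') +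
      dist (c₁ + c₂ + b₁' + b₂') (b₁ + b₂ + c₁' + c₂') := by
  have := quadD hd (a₁ + a₂) (a₁' + a₂') (b₁ + b₂) (b₁' + b₂') (c₁ + c₂) (c₁' + c₂')
  simpa only [← add_assoc] using this

lemma triB12 (a₁ a₂ a₁' a₂' b₁ b₂ b₁' b₂' : M) :
    dist (a₁ + a₂ + b₁' + b₂') (b₁ + b₂ + a₁' + a₂') ≤
      dist (a₁ + a₂) (a₁' + a₂') + dist (b₁ + b₂) (b₁' + b₂') := by
  have := triB hd (a₁ + a₂) (a₁' + a₂') (b₁ + b₂) (b₁' + b₂')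
  rw [add_comm (a₁' + a₂') (b₁ + b₂)] at this
  simpa only [← add_assoc] using this

lemma triC12 (a₁ a₂ a₁' a₂' b₁ b₂ b₁' b₂' : M) :
    dist (a₁ + a₂) (a₁' + a₂') ≤
      dist (a₁ + a₂ + b₁' + b₂') (b₁ + b₂ + a₁' + a₂') + dist (b₁ + b₂) (b₁' + b₂') := by
  have := triC hd (a₁ + a₂) (a₁' + a₂') (b₁ + b₂) (b₁' + b₂')
  rw [add_comm (a₁' + a₂') (b₁ + b₂)] at this
  simpa only [← add_assoc] using this

lemma cancel_right {u v : M} (w : M) (h : u + w = v + w) : u = v :=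
  dist_eq_zero.mp (by rw [← hd u v w, h, dist_self])

lemma tendsto_add_pt {x y : ℕ → M} {a b : M}
    (hx : Tendsto x atTop (nhds a)) (hy : Tendsto y atTop (nhds b)) :
    Tendsto (fun v => x v + y v) atTop (nhds (a + b)) := by
  rw [Metric.tendsto_atTop] at *
  intro ε hε
  obtain ⟨N1, h1⟩ := hx (ε/2) (by positivity)
  obtain ⟨N2, h2⟩ := hy (ε/2) (by positivity)
  refine ⟨max N1 N2, fun v hv => ?_⟩
  calc dist (x v + y v) (a + b) ≤ dist (x v) a + dist (y v) b := tri2 hd _ _ _ _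
  _ < ε/2 + ε/2 := add_lt_add (h1 v (le_of_max_le_left hv)) (h2 v (le_of_max_le_right hv))
  _ = ε := by ring

end RBVAux
end Helpers
section Helpers2
open Filter
namespace RBVAux
set_option linter.unusedSectionVars false
set_option linter.unusedVariables false

variable {M : Type*} [MetricSpace M] [AddCommSemigroup M] {p : ℝ}

/-! ### Product form of the double sums -/

lemma sum12_eq {m n : ℕ} (A : ℕ → ℕ → ℝ) :
    (∑ j ∈ range m, ∑ i ∈ range n, A j i) = ∑ x ∈ range m ×ˢ range n, A x.1 x.2 :=
  (Finset.sum_product' ..).symm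

/-! ### Nonnegativity -/

lemma rSum_nonneg_aux {ι : Type*} {S : Finset ι} {a : ι → ℝ} (ha : ∀ i ∈ S, 0 ≤ a i) :
    0 ≤ (∑ i ∈ S, a i) ^ (1/p) :=
  Real.rpow_nonneg (Finset.sum_nonneg ha) _

lemma w1_pos {n : ℕ} {t : ℕ → ℝ} (ht : IsPartition n t) {i : ℕ} (hi : i ∈ range n) :
    0 < (t (i + 1) - t i) ^ (p - 1) :=
  Real.rpow_pos_of_pos (gap_pos ht (Finset.mem_range.mp hi)) _

lemma w12_pos {n m : ℕ} {t s : ℕ → ℝ} (ht : IsPartition n t) (hs : IsPartition m s)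
    {x : ℕ × ℕ} (hx : x ∈ range m ×ˢ range n) :
    0 < (t (x.2 + 1) - t x.2) ^ (p - 1) * (s (x.1 + 1) - s x.1) ^ (p - 1) := by
  rw [Finset.mem_product] at hx
  exact mul_pos (w1_pos ht hx.2) (Real.rpow_pos_of_pos (gap_pos hs (Finset.mem_range.mp hx.1)) _)

lemma rSum1_nonneg (f : ℝ → ℝ → M) {n t} (ht : IsPartition n t) : 0 ≤ rSum1 p f n t :=
  rSum_nonneg_aux fun i hi => div_nonneg (Real.rpow_nonneg dist_nonneg _) (w1_pos ht hi).le

lemma rSum2_nonneg (f : ℝ → ℝ → M) {m s} (hs : IsPartition m s) : 0 ≤ rSum2 p f m s :=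
  rSum_nonneg_aux fun i hi => div_nonneg (Real.rpow_nonneg dist_nonneg _) (w1_pos hs hi).le

lemma rSum12_nonneg (f : ℝ → ℝ → M) {n t m s} (ht : IsPartition n t) (hs : IsPartition m s) :
    0 ≤ rSum12 p f n t m s :=
  rSum_nonneg_aux fun j hj => Finset.sum_nonneg fun i hi =>
    div_nonneg (Real.rpow_nonneg dist_nonneg _) (mul_pos (w1_pos ht hi) (w1_pos hs hj)).le

lemma rSum1J_nonneg (f g : ℝ → ℝ → M) {n t} (ht : IsPartition n t) : 0 ≤ rSum1J p f g n t :=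
  rSum_nonneg_aux fun i hi => div_nonneg (Real.rpow_nonneg dist_nonneg _) (w1_pos ht hi).le

lemma rSum2J_nonneg (f g : ℝ → ℝ → M) {m s} (hs : IsPartition m s) : 0 ≤ rSum2J p f g m s :=
  rSum_nonneg_aux fun i hi => div_nonneg (Real.rpow_nonneg dist_nonneg _) (w1_pos hs hi).le

lemma rSum12J_nonneg (f g : ℝ → ℝ → M) {n t m s} (ht : IsPartition n t) (hs : IsPartition m s) :
    0 ≤ rSum12J p f g n t m s :=
  rSum_nonneg_aux fun j hj => Finset.sum_nonneg fun i hi =>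
    div_nonneg (Real.rpow_nonneg dist_nonneg _) (mul_pos (w1_pos ht hi) (w1_pos hs hj)).le

lemma VpRPart_nonneg (f g : ℝ → ℝ → M) {n t m s} (ht : IsPartition n t) (hs : IsPartition m s) :
    0 ≤ VpRPart p f g n t m s :=
  add_nonneg (add_nonneg (rSum1J_nonneg f g ht) (rSum2J_nonneg f g hs)) (rSum12J_nonneg f g ht hs)

end RBVAux
end Helpers2
section Helpers3
open Filter
namespace RBVAux
set_option linter.unusedSectionVars false
set_option linter.unusedVariables false

variable {M : Type*} [MetricSpace M] [AddCommSemigroup M] {p : ℝ}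
variable (hp : 1 < p) (hd : ∀ u v w : M, dist (u + w) (v + w) = dist u v)
include hp hd

/-! ### Comparison lemmas for the one-dimensional sums -/

lemma rSum1J_tri (f g h : ℝ → ℝ → M) {n t} (ht : IsPartition n t) :
    rSum1J p f g n t ≤ rSum1J p f h n t + rSum1J p h g n t := by
  unfold rSum1J
  exact lp_sum_le hp (fun i hi => w1_pos ht hi)
    (fun i _ => dist_nonneg) (fun i _ => dist_nonneg) (fun i _ => dist_nonneg)
    (fun i _ => quad hd _ _ _ _ _ _)

lemma rSum2J_tri (f g h : ℝ → ℝ → M) {m s} (hs : IsPartition m s) :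
    rSum2J p f g m s ≤ rSum2J p f h m s + rSum2J p h g m s := by
  unfold rSum2J
  exact lp_sum_le hp (fun i hi => w1_pos hs hi)
    (fun i _ => dist_nonneg) (fun i _ => dist_nonneg) (fun i _ => dist_nonneg)
    (fun i _ => quad hd _ _ _ _ _ _)

lemma rSum12J_tri (f g h : ℝ → ℝ → M) {n t m s} (ht : IsPartition n t) (hs : IsPartition m s) :
    rSum12J p f g n t m s ≤ rSum12J p f h n t m s + rSum12J p h g n t m s := by
  unfold rSum12J
  simp only [sum12_eq]
  exact lp_sum_le hp (fun x hx => w12_pos ht hs hx)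
    (fun x _ => dist_nonneg) (fun x _ => dist_nonneg) (fun x _ => dist_nonneg)
    (fun x _ => quad12 hd _ _ _ _ _ _ _ _ _ _ _ _)

lemma rSum1J_le_add (f g : ℝ → ℝ → M) {n t} (ht : IsPartition n t) :
    rSum1J p f g n t ≤ rSum1 p f n t + rSum1 p g n t := by
  unfold rSum1J rSum1
  exact lp_sum_le hp (fun i hi => w1_pos ht hi)
    (fun i _ => dist_nonneg) (fun i _ => dist_nonneg) (fun i _ => dist_nonneg)
    (fun i _ => triB hd _ _ _ _)

lemma rSum2J_le_add (f g : ℝ → ℝ → M) {m s} (hs : IsPartition m s) :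
    rSum2J p f g m s ≤ rSum2 p f m s + rSum2 p g m s := by
  unfold rSum2J rSum2
  exact lp_sum_le hp (fun i hi => w1_pos hs hi)
    (fun i _ => dist_nonneg) (fun i _ => dist_nonneg) (fun i _ => dist_nonneg)
    (fun i _ => triB hd _ _ _ _)

lemma rSum12J_le_add (f g : ℝ → ℝ → M) {n t m s} (ht : IsPartition n t) (hs : IsPartition m s) :
    rSum12J p f g n t m s ≤ rSum12 p f n t m s + rSum12 p g n t m s := by
  unfold rSum12J rSum12
  simp only [sum12_eq]
  exact lp_sum_le hp (fun x hx => w12_pos ht hs hx)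
    (fun x _ => dist_nonneg) (fun x _ => dist_nonneg) (fun x _ => dist_nonneg)
    (fun x _ => triB12 hd _ _ _ _ _ _ _ _)

lemma rSum1_le_J (f g : ℝ → ℝ → M) {n t} (ht : IsPartition n t) :
    rSum1 p f n t ≤ rSum1J p f g n t + rSum1 p g n t := by
  unfold rSum1J rSum1
  exact lp_sum_le hp (fun i hi => w1_pos ht hi)
    (fun i _ => dist_nonneg) (fun i _ => dist_nonneg) (fun i _ => dist_nonneg)
    (fun i _ => triC hd _ _ _ _)

lemma rSum2_le_J (f g : ℝ → ℝ → M) {m s} (hs : IsPartition m s) :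
    rSum2 p f m s ≤ rSum2J p f g m s + rSum2 p g m s := by
  unfold rSum2J rSum2
  exact lp_sum_le hp (fun i hi => w1_pos hs hi)
    (fun i _ => dist_nonneg) (fun i _ => dist_nonneg) (fun i _ => dist_nonneg)
    (fun i _ => triC hd _ _ _ _)

lemma rSum12_le_J (f g : ℝ → ℝ → M) {n t m s} (ht : IsPartition n t) (hs : IsPartition m s) :
    rSum12 p f n t m s ≤ rSum12J p f g n t m s + rSum12 p g n t m s := by
  unfold rSum12J rSum12
  simp only [sum12_eq]
  exact lp_sum_le hp (fun x hx => w12_pos ht hs hx)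
    (fun x _ => dist_nonneg) (fun x _ => dist_nonneg) (fun x _ => dist_nonneg)
    (fun x _ => triC12 hd _ _ _ _ _ _ _ _)

/-! ### Symmetry -/

lemma rSum1J_comm (f g : ℝ → ℝ → M) (n : ℕ) (t : ℕ → ℝ) :
    rSum1J p f g n t = rSum1J p g f n t := by
  unfold rSum1J
  congr 1
  refine Finset.sum_congr rfl fun i _ => ?_
  rw [dist_comm, add_comm (f (t i) 0) (g (t (i+1)) 0), add_comm (f (t (i+1)) 0) (g (t i) 0)]

lemma rSum2J_comm (f g : ℝ → ℝ → M) (m : ℕ) (s : ℕ → ℝ) :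
    rSum2J p f g m s = rSum2J p g f m s := by
  unfold rSum2J
  congr 1
  refine Finset.sum_congr rfl fun j _ => ?_
  rw [dist_comm, add_comm (f 0 (s j)) (g 0 (s (j+1))), add_comm (f 0 (s (j+1))) (g 0 (s j))]

lemma rSum12J_comm (f g : ℝ → ℝ → M) (n : ℕ) (t : ℕ → ℝ) (m : ℕ) (s : ℕ → ℝ) :
    rSum12J p f g n t m s = rSum12J p g f n t m s := by
  unfold rSum12J
  congr 1
  refine Finset.sum_congr rfl fun j _ => Finset.sum_congr rfl fun i _ => ?_
  rw [dist_comm]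

lemma VpRPart_comm (f g : ℝ → ℝ → M) (n : ℕ) (t : ℕ → ℝ) (m : ℕ) (s : ℕ → ℝ) :
    VpRPart p f g n t m s = VpRPart p g f n t m s := by
  unfold VpRPart
  rw [rSum1J_comm hp hd, rSum2J_comm hp hd, rSum12J_comm hp hd]

lemma rSetJ_comm (f g : ℝ → ℝ → M) : rSetJ p f g = rSetJ p g f := by
  ext x
  constructor <;> rintro ⟨n, t, m, s, ht, hs, rfl⟩ <;>
    exact ⟨n, t, m, s, ht, hs, (VpRPart_comm hp hd _ _ _ _ _ _).symm⟩

end RBVAux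
end Helpers3
section Helpers4
open Filter
namespace RBVAux
set_option linter.unusedSectionVars false
set_option linter.unusedVariables false

variable {M : Type*} [MetricSpace M] [AddCommSemigroup M] {p : ℝ}
variable (hp : 1 < p) (hd : ∀ u v w : M, dist (u + w) (v + w) = dist u v)

lemma mem_rSetJ (f g : ℝ → ℝ → M) {n t m s} (ht : IsPartition n t) (hs : IsPartition m s) :
    VpRPart p f g n t m s ∈ rSetJ p f g := ⟨n, t, m, s, ht, hs, rfl⟩

lemma rSetJ_nonempty (f g : ℝ → ℝ → M) : (rSetJ p f g).Nonempty :=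
  ⟨_, mem_rSetJ f g part_triv part_triv⟩

lemma mem_rSet1 (f : ℝ → ℝ → M) {n t} (ht : IsPartition n t) :
    rSum1 p f n t ∈ rSet1 p f := ⟨n, t, ht, rfl⟩

lemma mem_rSet2 (f : ℝ → ℝ → M) {m s} (hs : IsPartition m s) :
    rSum2 p f m s ∈ rSet2 p f := ⟨m, s, hs, rfl⟩

lemma mem_rSet12 (f : ℝ → ℝ → M) {n t m s} (ht : IsPartition n t) (hs : IsPartition m s) :
    rSum12 p f n t m s ∈ rSet12 p f := ⟨n, t, m, s, ht, hs, rfl⟩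

include hp hd in
lemma bddAbove_rSetJ {f g : ℝ → ℝ → M} (hf : MemRBV p f) (hg : MemRBV p g) :
    BddAbove (rSetJ p f g) := by
  refine ⟨(sSup (rSet1 p f) + sSup (rSet2 p f) + sSup (rSet12 p f)) +
    (sSup (rSet1 p g) + sSup (rSet2 p g) + sSup (rSet12 p g)), ?_⟩
  rintro x ⟨n, t, m, s, ht, hs, rfl⟩
  have h1 := (rSum1J_le_add hp hd f g ht).trans
    (add_le_add (le_csSup hf.1 (mem_rSet1 f ht)) (le_csSup hg.1 (mem_rSet1 g ht)))
  have h2 := (rSum2J_le_add hp hd f g hs).trans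
    (add_le_add (le_csSup hf.2.1 (mem_rSet2 f hs)) (le_csSup hg.2.1 (mem_rSet2 g hs)))
  have h3 := (rSum12J_le_add hp hd f g ht hs).trans
    (add_le_add (le_csSup hf.2.2 (mem_rSet12 f ht hs)) (le_csSup hg.2.2 (mem_rSet12 g ht hs)))
  unfold VpRPart
  linarith

include hp hd in
lemma VpRPart_le_VpRJ {f g : ℝ → ℝ → M} (hf : MemRBV p f) (hg : MemRBV p g)
    {n t m s} (ht : IsPartition n t) (hs : IsPartition m s) :
    VpRPart p f g n t m s ≤ VpRJ p f g :=
  le_csSup (bddAbove_rSetJ hp hd hf hg) (mem_rSetJ f g ht hs)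

include hp hd in
lemma VpRJ_nonneg {f g : ℝ → ℝ → M} (hf : MemRBV p f) (hg : MemRBV p g) :
    0 ≤ VpRJ p f g :=
  (VpRPart_nonneg f g part_triv part_triv).trans
    (VpRPart_le_VpRJ hp hd hf hg part_triv part_triv)

include hp hd in
lemma rhoR_nonneg {f g : ℝ → ℝ → M} (hf : MemRBV p f) (hg : MemRBV p g) :
    0 ≤ rhoR p f g :=
  add_nonneg dist_nonneg (VpRJ_nonneg hp hd hf hg)

include hp hd in
lemma VpRJ_le_rhoR (f g : ℝ → ℝ → M) : VpRJ p f g ≤ rhoR p f g :=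
  le_add_of_nonneg_left dist_nonneg

include hp hd in
lemma VpRJ_tri {f g h : ℝ → ℝ → M} (hf : MemRBV p f) (hg : MemRBV p g) (hh : MemRBV p h) :
    VpRJ p f g ≤ VpRJ p f h + VpRJ p h g := by
  refine csSup_le (rSetJ_nonempty f g) ?_
  rintro x ⟨n, t, m, s, ht, hs, rfl⟩
  have tri : VpRPart p f g n t m s ≤ VpRPart p f h n t m s + VpRPart p h g n t m s := by
    unfold VpRPart
    have h1 := rSum1J_tri hp hd f g h ht
    have h2 := rSum2J_tri hp hd f g h hs
    have h3 := rSum12J_tri hp hd f g h ht hs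
    linarith
  exact tri.trans (add_le_add (VpRPart_le_VpRJ hp hd hf hh ht hs)
    (VpRPart_le_VpRJ hp hd hh hg ht hs))

include hp hd in
lemma memRBV_of_close {f g : ℝ → ℝ → M} (hg : MemRBV p g) (hbd : BddAbove (rSetJ p f g)) :
    MemRBV p f := by
  obtain ⟨B, hB⟩ := hbd
  refine ⟨⟨B + sSup (rSet1 p g), ?_⟩, ⟨B + sSup (rSet2 p g), ?_⟩, ⟨B + sSup (rSet12 p g), ?_⟩⟩
  · rintro x ⟨n, t, ht, rfl⟩
    have h1 := rSum1_le_J hp hd f g ht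
    have h2 : rSum1J p f g n t ≤ B := by
      have hle : rSum1J p f g n t ≤ VpRPart p f g n t (1) (fun i => if i = 0 then (0:ℝ) else 1) := by
        unfold VpRPart
        have := rSum2J_nonneg (p := p) f g part_triv
        have := rSum12J_nonneg (p := p) f g ht part_triv
        linarith
      exact hle.trans (hB (mem_rSetJ f g ht part_triv))
    have h3 := le_csSup hg.1 (mem_rSet1 g ht)
    linarith
  · rintro x ⟨m, s, hs, rfl⟩
    have h1 := rSum2_le_J hp hd f g hs
    have h2 : rSum2J p f g m s ≤ B := by
      have hle : rSum2J p f g m s ≤ VpRPart p f g (1) (fun i => if i = 0 then (0:ℝ) else 1) m s := by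
        unfold VpRPart
        have := rSum1J_nonneg (p := p) f g part_triv
        have := rSum12J_nonneg (p := p) f g part_triv hs
        linarith
      exact hle.trans (hB (mem_rSetJ f g part_triv hs))
    have h3 := le_csSup hg.2.1 (mem_rSet2 g hs)
    linarith
  · rintro x ⟨n, t, m, s, ht, hs, rfl⟩
    have h1 := rSum12_le_J hp hd f g ht hs
    have h2 : rSum12J p f g n t m s ≤ B := by
      have hle : rSum12J p f g n t m s ≤ VpRPart p f g n t m s := by
        unfold VpRPart
        have := rSum1J_nonneg (p := p) f g ht
        have := rSum2J_nonneg (p := p) f g hs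
        linarith
      exact hle.trans (hB (mem_rSetJ f g ht hs))
    have h3 := le_csSup hg.2.2 (mem_rSet12 g ht hs)
    linarith

end RBVAux
end Helpers4
section Helpers5
open Filter
namespace RBVAux
set_option linter.unusedSectionVars false
set_option linter.unusedVariables false

variable {M : Type*} [MetricSpace M] [AddCommSemigroup M] {p : ℝ}
variable (hp : 1 < p) (hd : ∀ u v w : M, dist (u + w) (v + w) = dist u v)

include hp in
lemma dist_le_rSum1J (f g : ℝ → ℝ → M) {n t} (ht : IsPartition n t) {k : ℕ} (hk : k < n) :
    dist (f (t (k+1)) 0 + g (t k) 0) (f (t k) 0 + g (t (k+1)) 0) ≤ rSum1J p f g n t := by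
  unfold rSum1J
  exact term_single_le hp
    (fun i hi => div_nonneg (Real.rpow_nonneg dist_nonneg _) (w1_pos ht hi).le)
    (Finset.mem_range.mpr hk) dist_nonneg (gap_pos ht hk) (gap_le_one ht hk) rfl

include hp in
lemma dist_le_rSum2J (f g : ℝ → ℝ → M) {m s} (hs : IsPartition m s) {l : ℕ} (hl : l < m) :
    dist (f 0 (s (l+1)) + g 0 (s l)) (f 0 (s l) + g 0 (s (l+1))) ≤ rSum2J p f g m s := by
  unfold rSum2J
  exact term_single_le hp
    (fun i hi => div_nonneg (Real.rpow_nonneg dist_nonneg _) (w1_pos hs hi).le)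
    (Finset.mem_range.mpr hl) dist_nonneg (gap_pos hs hl) (gap_le_one hs hl) rfl

include hp in
lemma dist_le_rSum12J (f g : ℝ → ℝ → M) {n t m s} (ht : IsPartition n t)
    (hs : IsPartition m s) {k l : ℕ} (hk : k < n) (hl : l < m) :
    dist (f (t (k+1)) (s (l+1)) + f (t k) (s l) + g (t (k+1)) (s l) + g (t k) (s (l+1)))
         (g (t (k+1)) (s (l+1)) + g (t k) (s l) + f (t (k+1)) (s l) + f (t k) (s (l+1)))
      ≤ rSum12J p f g n t m s := by
  unfold rSum12J
  simp only [sum12_eq]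
  refine term_single_le hp (k := ((l, k) : ℕ × ℕ))
    (fun x hx => div_nonneg (Real.rpow_nonneg dist_nonneg _) (w12_pos ht hs hx).le)
    (Finset.mem_product.mpr ⟨Finset.mem_range.mpr hl, Finset.mem_range.mpr hk⟩)
    dist_nonneg (mul_pos (gap_pos ht hk) (gap_pos hs hl))
    (mul_le_one₀ (gap_le_one ht hk) (gap_pos hs hl).le (gap_le_one hs hl)) ?_
  rw [← Real.mul_rpow (gap_pos ht hk).le (gap_pos hs hl).le]

include hp in
lemma rSum1J_le_VpRPart (f g : ℝ → ℝ → M) {n t m s} (ht : IsPartition n t)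
    (hs : IsPartition m s) : rSum1J p f g n t ≤ VpRPart p f g n t m s := by
  unfold VpRPart
  have h2 := rSum2J_nonneg (p := p) f g hs
  have h3 := rSum12J_nonneg (p := p) f g ht hs
  linarith

include hp in
lemma rSum2J_le_VpRPart (f g : ℝ → ℝ → M) {n t m s} (ht : IsPartition n t)
    (hs : IsPartition m s) : rSum2J p f g m s ≤ VpRPart p f g n t m s := by
  unfold VpRPart
  have h1 := rSum1J_nonneg (p := p) f g ht
  have h3 := rSum12J_nonneg (p := p) f g ht hs
  linarith

include hp in
lemma rSum12J_le_VpRPart (f g : ℝ → ℝ → M) {n t m s} (ht : IsPartition n t)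
    (hs : IsPartition m s) : rSum12J p f g n t m s ≤ VpRPart p f g n t m s := by
  unfold VpRPart
  have h1 := rSum1J_nonneg (p := p) f g ht
  have h2 := rSum2J_nonneg (p := p) f g hs
  linarith

include hp hd in
lemma distJ1_le_VpRJ {f g : ℝ → ℝ → M} (hf : MemRBV p f) (hg : MemRBV p g) {a : ℝ}
    (ha0 : 0 < a) (ha1 : a ≤ 1) :
    dist (f a 0 + g 0 0) (f 0 0 + g a 0) ≤ VpRJ p f g := by
  obtain ⟨n, τ, hτ, h0, h1, hn⟩ := part_start ha0 ha1
  have h := dist_le_rSum1J hp f g hτ hn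
  rw [zero_add, h0, h1] at h
  exact h.trans ((rSum1J_le_VpRPart hp f g hτ part_triv).trans
    (VpRPart_le_VpRJ hp hd hf hg hτ part_triv))

include hp hd in
lemma distJ2_le_VpRJ {f g : ℝ → ℝ → M} (hf : MemRBV p f) (hg : MemRBV p g) {b : ℝ}
    (hb0 : 0 < b) (hb1 : b ≤ 1) :
    dist (f 0 b + g 0 0) (f 0 0 + g 0 b) ≤ VpRJ p f g := by
  obtain ⟨m, σ, hσ, h0, h1, hm⟩ := part_start hb0 hb1
  have h := dist_le_rSum2J hp f g hσ hm
  rw [zero_add, h0, h1] at h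
  exact h.trans ((rSum2J_le_VpRPart hp f g part_triv hσ).trans
    (VpRPart_le_VpRJ hp hd hf hg part_triv hσ))

include hp hd in
lemma distJ12_le_VpRJ {f g : ℝ → ℝ → M} (hf : MemRBV p f) (hg : MemRBV p g) {a b : ℝ}
    (ha0 : 0 < a) (ha1 : a ≤ 1) (hb0 : 0 < b) (hb1 : b ≤ 1) :
    dist (f a b + f 0 0 + g a 0 + g 0 b) (g a b + g 0 0 + f a 0 + f 0 b) ≤ VpRJ p f g := by
  obtain ⟨n, τ, hτ, ht0, ht1, hn⟩ := part_start ha0 ha1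
  obtain ⟨m, σ, hσ, hs0, hs1, hm⟩ := part_start hb0 hb1
  have h := dist_le_rSum12J hp f g hτ hσ hn hm
  rw [zero_add, ht0, ht1, hs0, hs1] at h
  exact h.trans ((rSum12J_le_VpRPart hp f g hτ hσ).trans
    (VpRPart_le_VpRJ hp hd hf hg hτ hσ))

include hp hd in
lemma dist_pt_le {f g : ℝ → ℝ → M} (hf : MemRBV p f) (hg : MemRBV p g) {a b : ℝ}
    (hA : a ∈ Set.Icc (0:ℝ) 1) (hB : b ∈ Set.Icc (0:ℝ) 1) :
    dist (f a b) (g a b) ≤ dist (f 0 0) (g 0 0) + 3 * VpRJ p f g := by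
  have hV : 0 ≤ VpRJ p f g := VpRJ_nonneg hp hd hf hg
  have hedge1 : ∀ x : ℝ, 0 < x → x ≤ 1 →
      dist (f x 0) (g x 0) ≤ dist (f 0 0) (g 0 0) + VpRJ p f g := by
    intro x hx0 hx1
    have h := tri1 hd (f x 0) (g x 0) (g 0 0) (f 0 0)
    have h2 : dist (g 0 0) (f 0 0) = dist (f 0 0) (g 0 0) := dist_comm _ _
    have h3 : dist (f x 0 + g 0 0) (g x 0 + f 0 0) ≤ VpRJ p f g := by
      have := distJ1_le_VpRJ hp hd hf hg hx0 hx1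
      rwa [add_comm (f 0 0) (g x 0)] at this
    linarith
  have hedge2 : ∀ x : ℝ, 0 < x → x ≤ 1 →
      dist (f 0 x) (g 0 x) ≤ dist (f 0 0) (g 0 0) + VpRJ p f g := by
    intro x hx0 hx1
    have h := tri1 hd (f 0 x) (g 0 x) (g 0 0) (f 0 0)
    have h2 : dist (g 0 0) (f 0 0) = dist (f 0 0) (g 0 0) := dist_comm _ _
    have h3 : dist (f 0 x + g 0 0) (g 0 x + f 0 0) ≤ VpRJ p f g := by
      have := distJ2_le_VpRJ hp hd hf hg hx0 hx1
      rwa [add_comm (f 0 0) (g 0 x)] at this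
    linarith
  rcases eq_or_lt_of_le hA.1 with ha0 | ha0
  · rcases eq_or_lt_of_le hB.1 with hb0 | hb0
    · rw [← ha0, ← hb0]
      linarith [dist_nonneg (x := f 0 0) (y := g 0 0)]
    · rw [← ha0]
      have := hedge2 b hb0 hB.2
      linarith
  · rcases eq_or_lt_of_le hB.1 with hb0 | hb0
    · rw [← hb0]
      have := hedge1 a ha0 hA.2
      linarith
    · -- interior case
      have h0 := tri1 hd (f a b) (g a b) (f 0 0 + g a 0 + g 0 b) (g 0 0 + f a 0 + f 0 b)
      have h1 : dist (f a b + (f 0 0 + g a 0 + g 0 b)) (g a b + (g 0 0 + f a 0 + f 0 b))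
          ≤ VpRJ p f g := by
        have := distJ12_le_VpRJ hp hd hf hg ha0 hA.2 hb0 hB.2
        have e1 : f a b + (f 0 0 + g a 0 + g 0 b) = f a b + f 0 0 + g a 0 + g 0 b := by ac_rfl
        have e2 : g a b + (g 0 0 + f a 0 + f 0 b) = g a b + g 0 0 + f a 0 + f 0 b := by ac_rfl
        rwa [e1, e2]
      have h2 : dist (f 0 0 + g a 0 + g 0 b) (g 0 0 + f a 0 + f 0 b)
          ≤ dist (f 0 0 + g a 0) (g 0 0 + f a 0) + dist (g 0 b) (f 0 b) :=
        tri2 hd _ _ _ _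
      have h3 : dist (f 0 0 + g a 0) (g 0 0 + f a 0) ≤ VpRJ p f g := by
        have e : dist (f 0 0 + g a 0) (g 0 0 + f a 0)
            = dist (f a 0 + g 0 0) (f 0 0 + g a 0) := by
          rw [dist_comm, add_comm (g 0 0) (f a 0)]
        rw [e]
        exact distJ1_le_VpRJ hp hd hf hg ha0 hA.2
      have h4 : dist (g 0 b) (f 0 b) ≤ dist (f 0 0) (g 0 0) + VpRJ p f g := by
        rw [dist_comm]
        exact hedge2 b hb0 hB.2
      linarith

end RBVAux
end Helpers5
section Helpers6
open Filter
namespace RBVAux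
set_option linter.unusedSectionVars false
set_option linter.unusedVariables false

variable {M : Type*} [MetricSpace M] [AddCommSemigroup M] {p : ℝ}
variable (hp : 1 < p) (hd : ∀ u v w : M, dist (u + w) (v + w) = dist u v)

/-! ### Vanishing joint sums give equalities -/

include hp in
lemma rSum1J_eq_zero {f g : ℝ → ℝ → M} {n t} (ht : IsPartition n t)
    (h : rSum1J p f g n t = 0) {k : ℕ} (hk : k < n) :
    f (t (k+1)) 0 + g (t k) 0 = f (t k) 0 + g (t (k+1)) 0 := by
  have hle := dist_le_rSum1J hp f g ht hk
  rw [h] at hle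
  exact eq_of_dist_eq_zero (le_antisymm hle dist_nonneg)

include hp in
lemma rSum2J_eq_zero {f g : ℝ → ℝ → M} {m s} (hs : IsPartition m s)
    (h : rSum2J p f g m s = 0) {l : ℕ} (hl : l < m) :
    f 0 (s (l+1)) + g 0 (s l) = f 0 (s l) + g 0 (s (l+1)) := by
  have hle := dist_le_rSum2J hp f g hs hl
  rw [h] at hle
  exact eq_of_dist_eq_zero (le_antisymm hle dist_nonneg)

include hp in
lemma rSum12J_eq_zero {f g : ℝ → ℝ → M} {n t m s} (ht : IsPartition n t)
    (hs : IsPartition m s) (h : rSum12J p f g n t m s = 0) {k l : ℕ}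
    (hk : k < n) (hl : l < m) :
    f (t (k+1)) (s (l+1)) + f (t k) (s l) + g (t (k+1)) (s l) + g (t k) (s (l+1)) =
      g (t (k+1)) (s (l+1)) + g (t k) (s l) + f (t (k+1)) (s l) + f (t k) (s (l+1)) := by
  have hle := dist_le_rSum12J hp f g ht hs hk hl
  rw [h] at hle
  exact eq_of_dist_eq_zero (le_antisymm hle dist_nonneg)

/-! ### Equality on the square gives vanishing joint sums -/

include hp in
lemma rSum1J_zero_of_eq {f g : ℝ → ℝ → M}
    (heq : ∀ a ∈ Set.Icc (0:ℝ) 1, ∀ b ∈ Set.Icc (0:ℝ) 1, f a b = g a b)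
    {n t} (ht : IsPartition n t) : rSum1J p f g n t = 0 := by
  have h0 : (0:ℝ) ∈ Set.Icc (0:ℝ) 1 := by norm_num
  unfold rSum1J
  rw [Finset.sum_eq_zero, Real.zero_rpow (by positivity : 1/p ≠ 0)]
  intro i hi
  have hi' := Finset.mem_range.mp hi
  rw [heq _ (part_mem ht hi'.le) _ h0, heq _ (part_mem ht (Nat.succ_le_of_lt hi')) _ h0,
    add_comm (g (t (i+1)) 0) (g (t i) 0), dist_self]
  rw [Real.zero_rpow (by positivity : p ≠ 0), zero_div]

include hp in
lemma rSum2J_zero_of_eq {f g : ℝ → ℝ → M}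
    (heq : ∀ a ∈ Set.Icc (0:ℝ) 1, ∀ b ∈ Set.Icc (0:ℝ) 1, f a b = g a b)
    {m s} (hs : IsPartition m s) : rSum2J p f g m s = 0 := by
  have h0 : (0:ℝ) ∈ Set.Icc (0:ℝ) 1 := by norm_num
  unfold rSum2J
  rw [Finset.sum_eq_zero, Real.zero_rpow (by positivity : 1/p ≠ 0)]
  intro j hj
  have hj' := Finset.mem_range.mp hj
  rw [heq _ h0 _ (part_mem hs hj'.le), heq _ h0 _ (part_mem hs (Nat.succ_le_of_lt hj')),
    add_comm (g 0 (s (j+1))) (g 0 (s j)), dist_self]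
  rw [Real.zero_rpow (by positivity : p ≠ 0), zero_div]

include hp in
lemma rSum12J_zero_of_eq {f g : ℝ → ℝ → M}
    (heq : ∀ a ∈ Set.Icc (0:ℝ) 1, ∀ b ∈ Set.Icc (0:ℝ) 1, f a b = g a b)
    {n t m s} (ht : IsPartition n t) (hs : IsPartition m s) : rSum12J p f g n t m s = 0 := by
  unfold rSum12J
  rw [Finset.sum_eq_zero, Real.zero_rpow (by positivity : 1/p ≠ 0)]
  intro j hj
  rw [Finset.sum_eq_zero]
  intro i hi
  have hi' := Finset.mem_range.mp hi
  have hj' := Finset.mem_range.mp hj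
  rw [heq _ (part_mem ht (Nat.succ_le_of_lt hi')) _ (part_mem hs (Nat.succ_le_of_lt hj')),
    heq _ (part_mem ht hi'.le) _ (part_mem hs hj'.le),
    heq _ (part_mem ht (Nat.succ_le_of_lt hi')) _ (part_mem hs hj'.le),
    heq _ (part_mem ht hi'.le) _ (part_mem hs (Nat.succ_le_of_lt hj')), dist_self]
  rw [Real.zero_rpow (by positivity : p ≠ 0), zero_div]

/-! ### Convergence of joint variations in the second argument -/

include hd in
lemma tendsto_rSum1J (hpnn : 0 ≤ p) {F : ℕ → ℝ → ℝ → M} {f g : ℝ → ℝ → M}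
    (hptw : ∀ a ∈ Set.Icc (0:ℝ) 1, ∀ b ∈ Set.Icc (0:ℝ) 1,
      Tendsto (fun v => F v a b) atTop (nhds (f a b)))
    {n t} (ht : IsPartition n t) :
    Tendsto (fun v => rSum1J p g (F v) n t) atTop (nhds (rSum1J p g f n t)) := by
  have h0 : (0:ℝ) ∈ Set.Icc (0:ℝ) 1 := by norm_num
  unfold rSum1J
  refine Tendsto.rpow_const (tendsto_finset_sum _ fun i hi => ?_) (Or.inr (by positivity))
  have hi' := Finset.mem_range.mp hi
  refine Tendsto.div_const (Tendsto.rpow_const (Tendsto.dist ?_ ?_) (Or.inr hpnn)) _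
  · exact tendsto_add_pt hd tendsto_const_nhds (hptw _ (part_mem ht hi'.le) _ h0)
  · exact tendsto_add_pt hd tendsto_const_nhds (hptw _ (part_mem ht (Nat.succ_le_of_lt hi')) _ h0)

include hd in
lemma tendsto_rSum2J (hpnn : 0 ≤ p) {F : ℕ → ℝ → ℝ → M} {f g : ℝ → ℝ → M}
    (hptw : ∀ a ∈ Set.Icc (0:ℝ) 1, ∀ b ∈ Set.Icc (0:ℝ) 1,
      Tendsto (fun v => F v a b) atTop (nhds (f a b)))
    {m s} (hs : IsPartition m s) :
    Tendsto (fun v => rSum2J p g (F v) m s) atTop (nhds (rSum2J p g f m s)) := by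
  have h0 : (0:ℝ) ∈ Set.Icc (0:ℝ) 1 := by norm_num
  unfold rSum2J
  refine Tendsto.rpow_const (tendsto_finset_sum _ fun j hj => ?_) (Or.inr (by positivity))
  have hj' := Finset.mem_range.mp hj
  refine Tendsto.div_const (Tendsto.rpow_const (Tendsto.dist ?_ ?_) (Or.inr hpnn)) _
  · exact tendsto_add_pt hd tendsto_const_nhds (hptw _ h0 _ (part_mem hs hj'.le))
  · exact tendsto_add_pt hd tendsto_const_nhds (hptw _ h0 _ (part_mem hs (Nat.succ_le_of_lt hj')))

include hd in
lemma tendsto_rSum12J (hpnn : 0 ≤ p) {F : ℕ → ℝ → ℝ → M} {f g : ℝ → ℝ → M}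
    (hptw : ∀ a ∈ Set.Icc (0:ℝ) 1, ∀ b ∈ Set.Icc (0:ℝ) 1,
      Tendsto (fun v => F v a b) atTop (nhds (f a b)))
    {n t m s} (ht : IsPartition n t) (hs : IsPartition m s) :
    Tendsto (fun v => rSum12J p g (F v) n t m s) atTop (nhds (rSum12J p g f n t m s)) := by
  unfold rSum12J
  refine Tendsto.rpow_const (tendsto_finset_sum _ fun j hj => tendsto_finset_sum _ fun i hi => ?_)
    (Or.inr (by positivity))
  have hi' := Finset.mem_range.mp hi
  have hj' := Finset.mem_range.mp hj
  have m1 := part_mem ht hi'.le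
  have m2 := part_mem ht (Nat.succ_le_of_lt hi')
  have m3 := part_mem hs hj'.le
  have m4 := part_mem hs (Nat.succ_le_of_lt hj')
  refine Tendsto.div_const (Tendsto.rpow_const (Tendsto.dist ?_ ?_) (Or.inr hpnn)) _
  · exact tendsto_add_pt hd (tendsto_add_pt hd tendsto_const_nhds (hptw _ m2 _ m3))
      (hptw _ m1 _ m4)
  · exact tendsto_add_pt hd (tendsto_add_pt hd
      (tendsto_add_pt hd (hptw _ m2 _ m4) (hptw _ m1 _ m3)) tendsto_const_nhds)
      tendsto_const_nhds

include hd in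
lemma tendsto_VpRPart (hpnn : 0 ≤ p) {F : ℕ → ℝ → ℝ → M} {f g : ℝ → ℝ → M}
    (hptw : ∀ a ∈ Set.Icc (0:ℝ) 1, ∀ b ∈ Set.Icc (0:ℝ) 1,
      Tendsto (fun v => F v a b) atTop (nhds (f a b)))
    {n t m s} (ht : IsPartition n t) (hs : IsPartition m s) :
    Tendsto (fun v => VpRPart p g (F v) n t m s) atTop (nhds (VpRPart p g f n t m s)) := by
  unfold VpRPart
  exact ((tendsto_rSum1J hd hpnn hptw ht).add (tendsto_rSum2J hd hpnn hptw hs)).add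
    (tendsto_rSum12J hd hpnn hptw ht hs)

end RBVAux
end Helpers6
open Filter RBVAux
/-- For `p ∈ (1,∞)` and a complete metric semigroup `M`, the bivariate Riesz
bounded `p`-variation space `(RBV_p(I×I, M), ρ_R)` is a complete metric space. -/
theorem RBVp_complete_metric [CompleteSpace M] (p : ℝ) (hp : 1 < p)
    (hd : ∀ u v w : M, dist (u + w) (v + w) = dist u v) :
    (∀ f g : ℝ → ℝ → M, MemRBV p f → MemRBV p g →
      (rhoR p f g = 0 ↔ ∀ t ∈ Set.Icc (0:ℝ) 1, ∀ s ∈ Set.Icc (0:ℝ) 1, f t s = g t s))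
    ∧ (∀ f g : ℝ → ℝ → M, MemRBV p f → MemRBV p g → rhoR p f g = rhoR p g f)
    ∧ (∀ f g h : ℝ → ℝ → M, MemRBV p f → MemRBV p g → MemRBV p h →
        rhoR p f g ≤ rhoR p f h + rhoR p h g)
    ∧ (∀ F : ℕ → ℝ → ℝ → M, (∀ u, MemRBV p (F u)) →
        (∀ ε > (0:ℝ), ∃ N, ∀ u ≥ N, ∀ v ≥ N, rhoR p (F u) (F v) < ε) →
        ∃ f : ℝ → ℝ → M, MemRBV p f ∧
          Filter.Tendsto (fun u => rhoR p (F u) f) Filter.atTop (nhds 0)) := by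
  have h01 : (0:ℝ) ∈ Set.Icc (0:ℝ) 1 := by norm_num
  refine ⟨?_, ?_, ?_, ?_⟩
  · -- rhoR = 0 iff equal on the square
    intro f g hf hg
    constructor
    · intro h0
      have hnn1 : (0:ℝ) ≤ dist (f 0 0) (g 0 0) := dist_nonneg
      have hnn2 := VpRJ_nonneg hp hd hf hg
      have hd0 : dist (f 0 0) (g 0 0) = 0 := by unfold rhoR at h0; linarith
      have hV0 : VpRJ p f g = 0 := by unfold rhoR at h0; linarith
      have h00 : f 0 0 = g 0 0 := eq_of_dist_eq_zero hd0
      have hpart0 : ∀ n t m s, IsPartition n t → IsPartition m s →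
          rSum1J p f g n t = 0 ∧ rSum2J p f g m s = 0 ∧ rSum12J p f g n t m s = 0 := by
        intro n t m s ht hs
        have hle := VpRPart_le_VpRJ hp hd hf hg ht hs
        rw [hV0] at hle
        have h1 := rSum1J_nonneg (p := p) f g ht
        have h2 := rSum2J_nonneg (p := p) f g hs
        have h3 := rSum12J_nonneg (p := p) f g ht hs
        unfold VpRPart at hle
        exact ⟨by linarith, by linarith, by linarith⟩
      have hedge1 : ∀ x ∈ Set.Icc (0:ℝ) 1, f x 0 = g x 0 := by
        intro x hx
        rcases eq_or_lt_of_le hx.1 with h | h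
        · rw [← h]; exact h00
        obtain ⟨n, τ, hτ, e0, e1, hn⟩ := part_start h hx.2
        have hE := rSum1J_eq_zero hp hτ (hpart0 n τ 1 _ hτ part_triv).1 hn
        rw [zero_add, e0, e1] at hE
        have hE2 : f x 0 + g 0 0 = g x 0 + g 0 0 := by rw [hE, h00, add_comm]
        exact cancel_right hd _ hE2
      have hedge2 : ∀ x ∈ Set.Icc (0:ℝ) 1, f 0 x = g 0 x := by
        intro x hx
        rcases eq_or_lt_of_le hx.1 with h | h
        · rw [← h]; exact h00
        obtain ⟨m, σ, hσ, e0, e1, hm⟩ := part_start h hx.2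
        have hE := rSum2J_eq_zero hp hσ (hpart0 1 _ m σ part_triv hσ).2.1 hm
        rw [zero_add, e0, e1] at hE
        have hE2 : f 0 x + g 0 0 = g 0 x + g 0 0 := by rw [hE, h00, add_comm]
        exact cancel_right hd _ hE2
      intro a ha b hb
      rcases eq_or_lt_of_le ha.1 with h | hA
      · rw [← h]; exact hedge2 b hb
      rcases eq_or_lt_of_le hb.1 with h | hB
      · rw [← h]; exact hedge1 a ha
      obtain ⟨n, τ, hτ, t0, t1, hn⟩ := part_start hA ha.2
      obtain ⟨m, σ, hσ, s0, s1, hm⟩ := part_start hB hb.2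
      have hE := rSum12J_eq_zero hp hτ hσ (hpart0 n τ m σ hτ hσ).2.2 hn hm
      rw [zero_add, t0, t1, s0, s1] at hE
      rw [← h00, hedge1 a ha, hedge2 b hb] at hE
      have eL : f a b + f 0 0 + g a 0 + g 0 b = f a b + (f 0 0 + g a 0 + g 0 b) := by ac_rfl
      have eR : g a b + f 0 0 + g a 0 + g 0 b = g a b + (f 0 0 + g a 0 + g 0 b) := by ac_rfl
      rw [eL, eR] at hE
      exact cancel_right hd _ hE
    · intro heq
      unfold rhoR
      rw [heq 0 h01 0 h01, dist_self, zero_add]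
      unfold VpRJ
      have hset : rSetJ p f g = {0} := by
        ext x
        simp only [Set.mem_singleton_iff]
        constructor
        · rintro ⟨n, t, m, s, ht, hs, rfl⟩
          unfold VpRPart
          rw [rSum1J_zero_of_eq hp heq ht, rSum2J_zero_of_eq hp heq hs,
            rSum12J_zero_of_eq hp heq ht hs]
          ring
        · rintro rfl
          refine ⟨1, _, 1, _, part_triv, part_triv, ?_⟩
          unfold VpRPart
          rw [rSum1J_zero_of_eq hp heq part_triv, rSum2J_zero_of_eq hp heq part_triv,
            rSum12J_zero_of_eq hp heq part_triv part_triv]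
          ring
      rw [hset, csSup_singleton]
  · -- symmetry
    intro f g hf hg
    unfold rhoR VpRJ
    rw [dist_comm, rSetJ_comm hp hd]
  · -- triangle inequality
    intro f g h hf hg hh
    unfold rhoR
    have h1 := VpRJ_tri hp hd hf hg hh
    have h2 := dist_triangle (f 0 0) (h 0 0) (g 0 0)
    linarith
  · -- completeness
    intro F hFmem hcauchy
    have hM : Nonempty M := ⟨F 0 0 0⟩
    set f : ℝ → ℝ → M := fun a b => limUnder atTop (fun v => F v a b) with hfdef
    have hptw : ∀ a ∈ Set.Icc (0:ℝ) 1, ∀ b ∈ Set.Icc (0:ℝ) 1,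
        Tendsto (fun v => F v a b) atTop (nhds (f a b)) := by
      intro a ha b hb
      have hcs : CauchySeq (fun v => F v a b) := by
        rw [Metric.cauchySeq_iff]
        intro ε hε
        obtain ⟨N, hN⟩ := hcauchy (ε/5) (by positivity)
        refine ⟨N, fun u hu v hv => ?_⟩
        have h1 := dist_pt_le hp hd (hFmem u) (hFmem v) ha hb
        have h2 := hN u hu v hv
        have h3 : VpRJ p (F u) (F v) ≤ rhoR p (F u) (F v) :=
          le_add_of_nonneg_left dist_nonneg
        have h4 : dist (F u 0 0) (F v 0 0) ≤ rhoR p (F u) (F v) :=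
          le_add_of_nonneg_right (VpRJ_nonneg hp hd (hFmem u) (hFmem v))
        calc dist (F u a b) (F v a b)
            ≤ dist (F u 0 0) (F v 0 0) + 3 * VpRJ p (F u) (F v) := h1
        _ ≤ 4 * rhoR p (F u) (F v) := by linarith
        _ < 4 * (ε/5) := by linarith
        _ < ε := by linarith
      exact hcs.tendsto_limUnder
    have key : ∀ ε > (0:ℝ), ∃ N, ∀ u ≥ N,
        (∀ n t m s, IsPartition n t → IsPartition m s → VpRPart p (F u) f n t m s ≤ ε)
        ∧ dist (F u 0 0) (f 0 0) ≤ ε := by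
      intro ε hε
      obtain ⟨N, hN⟩ := hcauchy ε hε
      refine ⟨N, fun u hu => ⟨?_, ?_⟩⟩
      · intro n t m s ht hs
        have hT := tendsto_VpRPart hd (le_of_lt (lt_trans one_pos hp)) hptw ht hs (g := F u)
        refine le_of_tendsto hT ?_
        filter_upwards [eventually_ge_atTop N] with v hv
        refine (VpRPart_le_VpRJ hp hd (hFmem u) (hFmem v) ht hs).trans ?_
        have h3 : VpRJ p (F u) (F v) ≤ rhoR p (F u) (F v) :=
          le_add_of_nonneg_left dist_nonneg
        exact h3.trans (hN u hu v hv).le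
      · refine le_of_tendsto (Tendsto.dist tendsto_const_nhds (hptw 0 h01 0 h01)) ?_
        filter_upwards [eventually_ge_atTop N] with v hv
        have h4 : dist (F u 0 0) (F v 0 0) ≤ rhoR p (F u) (F v) :=
          le_add_of_nonneg_right (VpRJ_nonneg hp hd (hFmem u) (hFmem v))
        exact h4.trans (hN u hu v hv).le
    obtain ⟨N₁, hN₁⟩ := key 1 one_pos
    have hbddJ : BddAbove (rSetJ p f (F N₁)) := by
      rw [rSetJ_comm hp hd]
      refine ⟨1, ?_⟩
      rintro x ⟨n, t, m, s, ht, hs, rfl⟩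
      exact (hN₁ N₁ le_rfl).1 n t m s ht hs
    have hfmem : MemRBV p f := memRBV_of_close hp hd (hFmem N₁) hbddJ
    refine ⟨f, hfmem, ?_⟩
    rw [Metric.tendsto_atTop]
    intro ε hε
    obtain ⟨N, hN⟩ := key (ε/3) (by positivity)
    refine ⟨N, fun u hu => ?_⟩
    have h1 := (hN u hu).2
    have h2 : VpRJ p (F u) f ≤ ε/3 := by
      refine csSup_le (rSetJ_nonempty _ _) ?_
      rintro x ⟨n, t, m, s, ht, hs, rfl⟩
      exact (hN u hu).1 n t m s ht hs
    have h3 : 0 ≤ rhoR p (F u) f := rhoR_nonneg hp hd (hFmem u) hfmem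
    rw [Real.dist_eq, sub_zero, abs_of_nonneg h3]
    unfold rhoR
    unfold rhoR at h3
    linarith
end

section
/- Let p ∈ (1,∞) and (M,d,+) a complete metric semigroup. A set A ⊆ RBV_p(I×I,M) is precompact if (i) A is joint equivariated: for every ε>0 there exist partitions Π_ε, Π*_ε with V_p^R(f,g) ≤ ε + V_p^R(f,g,Π_ε×Π*_ε) for all f,g ∈ A; and (ii) for every t,s ∈ [0,1], {f(t,s) : f ∈ A} is precompact in M. -/
open Finset

variable {M : Type*} [MetricSpace M] [AddCommSemigroup M]

private lemma dist_add_add' (hd : ∀ u v w : M, dist (u + w) (v + w) = dist u v)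
    (a b c d : M) : dist (a + c) (b + d) ≤ dist a b + dist c d := by
  calc dist (a + c) (b + d) ≤ dist (a + c) (b + c) + dist (b + c) (b + d) :=
        dist_triangle _ _ _
    _ = dist a b + dist c d := by
        rw [hd]; congr 1; rw [add_comm b c, add_comm b d, hd]

private lemma partition_mono {n : ℕ} {t : ℕ → ℝ} (h : IsPartition n t) :
    ∀ i j, i ≤ j → j ≤ n → t i ≤ t j := by
  have key : ∀ j, j ≤ n → ∀ i, i ≤ j → t i ≤ t j := by
    intro j
    induction j with
    | zero => intro _ i hi; simp [Nat.le_zero.1 hi]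
    | succ k ih =>
      intro hk i hi
      rcases Nat.lt_or_ge i (k + 1) with h' | h'
      · exact le_trans (ih (by omega) i (by omega)) (le_of_lt (h.2.2.2 k (by omega)))
      · have hik : i = k + 1 := by omega
        simp [hik]
  exact fun i j hij hjn => key j hjn i hij

private lemma partition_mem {n : ℕ} {t : ℕ → ℝ} (h : IsPartition n t) {i : ℕ}
    (hi : i ≤ n) : t i ∈ Set.Icc (0:ℝ) 1 :=
  ⟨h.2.1 ▸ partition_mono h 0 i (Nat.zero_le _) hi,
   h.2.2.1 ▸ partition_mono h i n hi le_rfl⟩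

private lemma sum_bound {α : Type*} (p δ : ℝ) (hp : 1 < p) (hδ : 0 ≤ δ)
    {F : Finset α} {a c : α → ℝ}
    (hc : ∀ x ∈ F, 0 < c x) (ha : ∀ x ∈ F, 0 ≤ a x) (hab : ∀ x ∈ F, a x ≤ δ) :
    (∑ x ∈ F, a x ^ p / c x) ^ (1 / p) ≤ δ * (∑ x ∈ F, (c x)⁻¹) ^ (1 / p) := by
  have hp0 : (0:ℝ) ≤ 1 / p := by positivity
  have hinv : (0:ℝ) ≤ ∑ x ∈ F, (c x)⁻¹ :=
    Finset.sum_nonneg fun x hx => (inv_nonneg.2 (hc x hx).le)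
  calc (∑ x ∈ F, a x ^ p / c x) ^ (1 / p)
      ≤ (∑ x ∈ F, δ ^ p * (c x)⁻¹) ^ (1 / p) := by
        apply Real.rpow_le_rpow
          (Finset.sum_nonneg fun x hx =>
            div_nonneg (Real.rpow_nonneg (ha x hx) p) (hc x hx).le)
          (Finset.sum_le_sum fun x hx => ?_) hp0
        rw [div_eq_mul_inv]
        exact mul_le_mul_of_nonneg_right
          (Real.rpow_le_rpow (ha x hx) (hab x hx) (by linarith))
          (inv_nonneg.2 (hc x hx).le)
    _ = (δ ^ p * ∑ x ∈ F, (c x)⁻¹) ^ (1 / p) := by rw [Finset.mul_sum]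
    _ = δ * (∑ x ∈ F, (c x)⁻¹) ^ (1 / p) := by
        rw [Real.mul_rpow (Real.rpow_nonneg hδ p) hinv, ← Real.rpow_mul hδ,
          mul_one_div_cancel (by linarith : p ≠ 0), Real.rpow_one]

private lemma key (p : ℝ) (hp : 1 < p)
    (hd : ∀ u v w : M, dist (u + w) (v + w) = dist u v)
    {n : ℕ} {t : ℕ → ℝ} {m : ℕ} {s : ℕ → ℝ}
    (hn : IsPartition n t) (hm : IsPartition m s) {ε : ℝ} (hε : 0 < ε) :
    ∃ δ > 0, ∀ f g : ℝ → ℝ → M,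
      (∀ i ≤ n, ∀ j ≤ m, dist (f (t i) (s j)) (g (t i) (s j)) ≤ δ) →
      VpRPart p f g n t m s ≤ ε := by
  have hΔt : ∀ i ∈ range n, (0:ℝ) < (t (i + 1) - t i) ^ (p - 1) := fun i hi =>
    Real.rpow_pos_of_pos (sub_pos.2 (hn.2.2.2 i (mem_range.1 hi))) _
  have hΔs : ∀ j ∈ range m, (0:ℝ) < (s (j + 1) - s j) ^ (p - 1) := fun j hj =>
    Real.rpow_pos_of_pos (sub_pos.2 (hm.2.2.2 j (mem_range.1 hj))) _
  obtain ⟨S1, hS1def⟩ : ∃ x : ℝ, x = ∑ i ∈ range n, ((t (i + 1) - t i) ^ (p - 1))⁻¹ := ⟨_, rfl⟩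
  obtain ⟨S2, hS2def⟩ : ∃ x : ℝ, x = ∑ j ∈ range m, ((s (j + 1) - s j) ^ (p - 1))⁻¹ := ⟨_, rfl⟩
  obtain ⟨S12, hS12def⟩ : ∃ x : ℝ, x = ∑ x ∈ range m ×ˢ range n,
      ((t (x.2 + 1) - t x.2) ^ (p - 1) * (s (x.1 + 1) - s x.1) ^ (p - 1))⁻¹ := ⟨_, rfl⟩
  have hS1 : 0 ≤ S1 := hS1def ▸ Finset.sum_nonneg fun i hi => (inv_nonneg.2 (hΔt i hi).le)
  have hS2 : 0 ≤ S2 := hS2def ▸ Finset.sum_nonneg fun j hj => (inv_nonneg.2 (hΔs j hj).le)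
  have hS12 : 0 ≤ S12 := hS12def ▸ Finset.sum_nonneg (fun x hx => inv_nonneg.2
    (mul_pos (hΔt x.2 (Finset.mem_product.1 hx).2) (hΔs x.1 (Finset.mem_product.1 hx).1)).le)
  obtain ⟨C, hCdef⟩ : ∃ x : ℝ, x = 2 * S1 ^ (1/p) + 2 * S2 ^ (1/p) + 4 * S12 ^ (1/p) := ⟨_, rfl⟩
  have hC : 0 ≤ C := by
    have := Real.rpow_nonneg hS1 (1/p)
    have := Real.rpow_nonneg hS2 (1/p)
    have := Real.rpow_nonneg hS12 (1/p)
    linarith [hCdef]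
  refine ⟨ε / (C + 1), by positivity, fun f g h => ?_⟩
  obtain ⟨δ, hδdef⟩ : ∃ x : ℝ, x = ε / (C + 1) := ⟨_, rfl⟩
  rw [← hδdef] at h
  have hδ : 0 ≤ δ := by rw [hδdef]; positivity
  have h1 : rSum1J p f g n t ≤ 2 * δ * S1 ^ (1/p) := by
    rw [hS1def]; unfold rSum1J
    apply sum_bound p (2 * δ) hp (by linarith) hΔt (fun i _ => dist_nonneg)
    intro i hi
    have ha := h (i + 1) (mem_range.1 hi) 0 (Nat.zero_le _)
    have hb := h i (le_of_lt (mem_range.1 hi)) 0 (Nat.zero_le _)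
    rw [hm.2.1] at ha hb
    calc dist (f (t (i + 1)) 0 + g (t i) 0) (f (t i) 0 + g (t (i + 1)) 0)
        = dist (f (t (i + 1)) 0 + g (t i) 0) (g (t (i + 1)) 0 + f (t i) 0) := by
          rw [add_comm (f (t i) 0)]
      _ ≤ dist (f (t (i + 1)) 0) (g (t (i + 1)) 0) + dist (g (t i) 0) (f (t i) 0) :=
          dist_add_add' hd _ _ _ _
      _ ≤ 2 * δ := by rw [dist_comm (g (t i) 0)]; linarith
  have h2 : rSum2J p f g m s ≤ 2 * δ * S2 ^ (1/p) := by
    rw [hS2def]; unfold rSum2J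
    apply sum_bound p (2 * δ) hp (by linarith) hΔs (fun j _ => dist_nonneg)
    intro j hj
    have ha := h 0 (Nat.zero_le _) (j + 1) (mem_range.1 hj)
    have hb := h 0 (Nat.zero_le _) j (le_of_lt (mem_range.1 hj))
    rw [hn.2.1] at ha hb
    calc dist (f 0 (s (j + 1)) + g 0 (s j)) (f 0 (s j) + g 0 (s (j + 1)))
        = dist (f 0 (s (j + 1)) + g 0 (s j)) (g 0 (s (j + 1)) + f 0 (s j)) := by
          rw [add_comm (f 0 (s j))]
      _ ≤ dist (f 0 (s (j + 1))) (g 0 (s (j + 1))) + dist (g 0 (s j)) (f 0 (s j)) :=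
          dist_add_add' hd _ _ _ _
      _ ≤ 2 * δ := by rw [dist_comm (g 0 (s j))]; linarith
  have h12 : rSum12J p f g n t m s ≤ 4 * δ * S12 ^ (1/p) := by
    rw [hS12def]; unfold rSum12J
    rw [← Finset.sum_product']
    apply sum_bound p (4 * δ) hp (by linarith)
      (fun x hx => (mul_pos (hΔt x.2 (Finset.mem_product.1 hx).2)
        (hΔs x.1 (Finset.mem_product.1 hx).1)))
      (fun x _ => dist_nonneg)
    rintro ⟨j, i⟩ hx
    obtain ⟨hj, hi⟩ := Finset.mem_product.1 hx
    have hi' := mem_range.1 hi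
    have hj' := mem_range.1 hj
    have ha := h (i + 1) hi' (j + 1) hj'
    have hb := h i (le_of_lt hi') j (le_of_lt hj')
    have hc := h (i + 1) hi' j (le_of_lt hj')
    have he := h i (le_of_lt hi') (j + 1) hj'
    set A1 := f (t (i + 1)) (s (j + 1)); set A2 := g (t (i + 1)) (s (j + 1))
    set B1 := f (t i) (s j); set B2 := g (t i) (s j)
    set C1 := f (t (i + 1)) (s j); set C2 := g (t (i + 1)) (s j)
    set D1 := f (t i) (s (j + 1)); set D2 := g (t i) (s (j + 1))
    calc dist (A1 + B1 + C2 + D2) (A2 + B2 + C1 + D1)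
        = dist ((A1 + B1) + (C2 + D2)) ((A2 + B2) + (C1 + D1)) := by
          rw [add_assoc (A1 + B1), add_assoc (A2 + B2)]
      _ ≤ dist (A1 + B1) (A2 + B2) + dist (C2 + D2) (C1 + D1) :=
          dist_add_add' hd _ _ _ _
      _ ≤ (dist A1 A2 + dist B1 B2) + (dist C2 C1 + dist D2 D1) := by
          have := dist_add_add' hd A1 A2 B1 B2
          have := dist_add_add' hd C2 C1 D2 D1
          linarith
      _ ≤ 4 * δ := by
          rw [dist_comm C2 C1, dist_comm D2 D1]; linarith
  have hmul : δ * C ≤ δ * (C + 1) := mul_le_mul_of_nonneg_left (by linarith) hδ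
  have hfin : δ * (C + 1) = ε := by rw [hδdef]; exact div_mul_cancel₀ ε (by positivity)
  have hsum : rSum1J p f g n t + rSum2J p f g m s + rSum12J p f g n t m s ≤ δ * C := by
    rw [hCdef]; nlinarith [h1, h2, h12]
  unfold VpRPart
  exact hsum.trans (hmul.trans_eq hfin)

/-- Sufficient conditions for precompactness (total boundedness w.r.t. `ρ_R`)
of a set `A ⊆ RBV_p(I×I, M)`: (i) `A` is joint equivariated, and (ii) each
pointwise section `{f(t,s) : f ∈ A}` is precompact in `M`. -/
theorem RBVp_precompact [CompleteSpace M] (p : ℝ) (hp : 1 < p)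
    (hd : ∀ u v w : M, dist (u + w) (v + w) = dist u v)
    (A : Set (ℝ → ℝ → M)) (hA : ∀ f ∈ A, MemRBV p f)
    (hequi : ∀ ε > (0:ℝ), ∃ n t m s, IsPartition n t ∧ IsPartition m s ∧
      ∀ f ∈ A, ∀ g ∈ A, VpRJ p f g ≤ ε + VpRPart p f g n t m s)
    (hpt : ∀ t ∈ Set.Icc (0:ℝ) 1, ∀ s ∈ Set.Icc (0:ℝ) 1,
      IsCompact (closure {x : M | ∃ f ∈ A, f t s = x})) :
    ∀ ε > (0:ℝ), ∃ G : Set (ℝ → ℝ → M), G ⊆ A ∧ G.Finite ∧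
      ∀ f ∈ A, ∃ g ∈ G, rhoR p f g < ε := by
  intro ε hε
  rcases A.eq_empty_or_nonempty with rfl | ⟨f₀, hf₀⟩
  · exact ⟨∅, by simp, Set.finite_empty, by simp⟩
  haveI : Inhabited (ℝ → ℝ → M) := ⟨f₀⟩
  obtain ⟨n, t, m, s, hn, hm, hb⟩ := hequi (ε/3) (by linarith)
  obtain ⟨δ₀, hδ₀, hkey⟩ := key p hp hd hn hm (show (0:ℝ) < ε/3 by linarith)
  obtain ⟨δ, hδdef⟩ : ∃ x : ℝ, x = min δ₀ (ε/6) := ⟨_, rfl⟩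
  have hδpos : 0 < δ := hδdef ▸ lt_min hδ₀ (by linarith)
  have hδ1 : δ ≤ δ₀ := hδdef ▸ min_le_left _ _
  have hδ2 : δ ≤ ε/6 := hδdef ▸ min_le_right _ _
  let Φ : (ℝ → ℝ → M) → (Fin (n+1) × Fin (m+1) → M) := fun f q => f (t q.1) (s q.2)
  have hcomp : IsCompact (Set.univ.pi fun q : Fin (n+1) × Fin (m+1) =>
      closure {x : M | ∃ f ∈ A, f (t q.1) (s q.2) = x}) :=
    isCompact_univ_pi fun q =>
      hpt (t q.1) (partition_mem hn (Nat.lt_succ_iff.1 q.1.2))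
          (s q.2) (partition_mem hm (Nat.lt_succ_iff.1 q.2.2))
  have hsub : Φ '' A ⊆ Set.univ.pi fun q : Fin (n+1) × Fin (m+1) =>
      closure {x : M | ∃ f ∈ A, f (t q.1) (s q.2) = x} := by
    rintro _ ⟨f, hf, rfl⟩ q _
    exact subset_closure ⟨f, hf, rfl⟩
  have htb : TotallyBounded (Φ '' A) := hcomp.totallyBounded.subset hsub
  obtain ⟨T, hTsub, hTfin, hTcov⟩ :=
    totallyBounded_iff_subset.1 htb _ (Metric.dist_mem_uniformity hδpos)
  have hch : ∀ y ∈ T, ∃ g, g ∈ A ∧ Φ g = y := by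
    intro y hy
    obtain ⟨g, hg, hgy⟩ := hTsub hy
    exact ⟨g, hg, hgy⟩
  choose! gfun hg1 hg2 using hch
  refine ⟨gfun '' T, ?_, hTfin.image _, ?_⟩
  · rintro _ ⟨y, hy, rfl⟩; exact hg1 y hy
  · intro f hf
    obtain ⟨y, hy, hfy⟩ := Set.mem_iUnion₂.1 (hTcov ⟨f, hf, rfl⟩)
    refine ⟨gfun y, ⟨y, hy, rfl⟩, ?_⟩
    have hgA : gfun y ∈ A := hg1 y hy
    have hΦg : Φ (gfun y) = y := hg2 y hy
    have hdist : dist (Φ f) (Φ (gfun y)) < δ := by rw [hΦg]; exact hfy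
    have hpointwise : ∀ i ≤ n, ∀ j ≤ m,
        dist (f (t i) (s j)) (gfun y (t i) (s j)) ≤ δ := by
      intro i hi j hj
      have := dist_le_pi_dist (Φ f) (Φ (gfun y)) (⟨i, by omega⟩, ⟨j, by omega⟩)
      exact this.trans hdist.le
    have h00 : dist (f 0 0) (gfun y 0 0) ≤ δ := by
      have := hpointwise 0 (Nat.zero_le _) 0 (Nat.zero_le _)
      rwa [hn.2.1, hm.2.1] at this
    have hV : VpRJ p f (gfun y) ≤ ε/3 + ε/3 := by
      refine (hb f hf (gfun y) hgA).trans ?_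
      have := hkey f (gfun y) (fun i hi j hj => (hpointwise i hi j hj).trans hδ1)
      linarith
    unfold rhoR
    linarith
end
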